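/- arXiv:math/0509368 — 5 statements merged into one kernel-verified Lean document; each statement's English description precedes it below -/
import Mathlib

section
/- For all μ, ν ∈ ℂ, the map τ = μτ₁ + ντ₂, where τ₁(t^r d_a, t^m d_b) = m_a r_b Σ_{p=0}^N m_p t^{r+m} k_p and τ₂(t^r d_a, t^m d_b) = r_a m_b Σ_{p=0}^N m_p t^{r+m} k_p (r, m ∈ ℤ^{N+1}, 0 ≤ a, b ≤ N), is a 2-cocycle on the Lie algebra D with values in the D-module K; that is, τ is bilinear, τ(x,y) = −τ(y,x) in K for all x, y ∈ D, and x·τ(y,z) + y·τ(z,x) + z·τ(x,y) = τ([x,y],z) + τ([y,z],x) + τ([z,x],y) for all x, y, z ∈ D. -/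
/-!
STATEMENT 1: for all μ, ν ∈ ℂ, the map τ = μτ₁ + ντ₂ is a 2-cocycle on the
Lie algebra D of vector fields on the torus with values in the D-module
K = Ω¹_R/d(R): τ is bilinear, antisymmetric and satisfies the cocycle
identity.
-/

namespace ToroidalPaper1

noncomputable section

/-- multi-indices r ∈ ℤ^{N+1} -/
abbrev Idx (N : ℕ) := Fin (N + 1) → ℤ

/-- model of the 1-forms Ω¹_R in the basis t^r k_p -/
abbrev OmegaR (N : ℕ) := Idx N →₀ (Fin (N + 1) → ℂ)

/-- the exact forms d(R): d(t^r) = Σ_p r_p t^r k_p -/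
def dR (N : ℕ) : Submodule ℂ (OmegaR N) :=
  Submodule.span ℂ {w : OmegaR N | ∃ r : Idx N, w = Finsupp.single r fun p => (r p : ℂ)}

/-- K = Ω¹_R/d(R) -/
abbrev Kmod (N : ℕ) := OmegaR N ⧸ dR N

/-- model of the Lie algebra D of vector fields in the basis t^r d_p -/
abbrev Dmod (N : ℕ) := Idx N →₀ (Fin (N + 1) → ℂ)

/-- A realization of the Lie algebra D of vector fields on the torus together
with its Lie-derivative module K = Ω¹_R/d(R). -/
structure WittSetup (N : ℕ) where
  D : Type
  [instLieRing : LieRing D]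
  [instLieAlgebra : LieAlgebra ℂ D]
  K : Type
  [instAdd : AddCommGroup K]
  [instMod : Module ℂ K]
  [instLieMod : LieRingModule D K]
  [instLieMod' : LieModule ℂ D K]
  eD : D ≃ₗ[ℂ] Dmod N
  eK : K ≃ₗ[ℂ] Kmod N

attribute [instance] WittSetup.instLieRing WittSetup.instLieAlgebra
  WittSetup.instAdd WittSetup.instMod WittSetup.instLieMod WittSetup.instLieMod'

namespace WittSetup

variable {N : ℕ} (S : WittSetup N)

/-- the vector field t^r d_a -/
def dEl (r : Idx N) (a : Fin (N + 1)) : S.D :=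
  S.eD.symm (Finsupp.single r (Pi.single a 1))

/-- the 1-form t^r k_b (mod d(R)) -/
def kEl (r : Idx N) (b : Fin (N + 1)) : S.K :=
  S.eK.symm (Submodule.Quotient.mk (p := dR N) (Finsupp.single r (Pi.single b 1)))

/-- The requirement that the bracket of D and its action on K are the ones of
the Lie algebra of vector fields acting on 1-forms modulo exact forms:
[t^r d_a, t^m d_b] = m_a t^{r+m} d_b − r_b t^{r+m} d_a,
(t^r d_a)·(t^m k_b) = m_a t^{r+m} k_b + δ_{ab} Σ_p r_p t^{r+m} k_p. -/
structure IsWitt : Prop where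
  br : ∀ (r m : Idx N) (a b : Fin (N + 1)),
    ⁅S.dEl r a, S.dEl m b⁆ =
      (m a : ℂ) • S.dEl (r + m) b - (r b : ℂ) • S.dEl (r + m) a
  act : ∀ (r m : Idx N) (a b : Fin (N + 1)),
    ⁅S.dEl r a, S.kEl m b⁆ =
      (m a : ℂ) • S.kEl (r + m) b
      + (if a = b then (1 : ℂ) else 0) •
          ∑ p : Fin (N + 1), (r p : ℂ) • S.kEl (r + m) p

/-- τ = μτ₁ + ντ₂, defined on basis elements by
τ(t^r d_a, t^m d_b) = (μ m_a r_b + ν r_a m_b) Σ_p m_p t^{r+m} k_p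
and extended bilinearly via coordinates. -/
def tau (μ ν : ℂ) (x y : S.D) : S.K :=
  (S.eD x).sum fun r cr =>
    (S.eD y).sum fun m cm =>
      ∑ a : Fin (N + 1), ∑ b : Fin (N + 1),
        (cr a * cm b * (μ * (m a : ℂ) * (r b : ℂ) + ν * (r a : ℂ) * (m b : ℂ))) •
          ∑ p : Fin (N + 1), (m p : ℂ) • S.kEl (r + m) p

end WittSetup

namespace WittSetup

variable {N : ℕ} (S : WittSetup N) (μ ν : ℂ)

/-- linearity of τ in the first argument: additivity -/
lemma tau_add_left (x x' y : S.D) :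
    S.tau μ ν (x + x') y = S.tau μ ν x y + S.tau μ ν x' y := by
  unfold tau
  rw [map_add]
  refine Finsupp.sum_add_index' (fun r => by simp) (fun r c c' => ?_)
  rw [← Finsupp.sum_add]
  refine Finsupp.sum_congr fun m _ => ?_
  rw [← Finset.sum_add_distrib]
  refine Finset.sum_congr rfl fun a _ => ?_
  rw [← Finset.sum_add_distrib]
  refine Finset.sum_congr rfl fun b _ => ?_
  rw [Pi.add_apply, ← add_smul]
  congr 1
  ring

lemma tau_smul_left (t : ℂ) (x y : S.D) :
    S.tau μ ν (t • x) y = t • S.tau μ ν x y := by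
  unfold tau
  rw [map_smul, Finsupp.sum_smul_index' (fun r => by simp), Finsupp.smul_sum]
  refine Finsupp.sum_congr fun r _ => ?_
  rw [Finsupp.smul_sum]
  refine Finsupp.sum_congr fun m _ => ?_
  rw [Finset.smul_sum]
  refine Finset.sum_congr rfl fun a _ => ?_
  rw [Finset.smul_sum]
  refine Finset.sum_congr rfl fun b _ => ?_
  rw [Pi.smul_apply, smul_eq_mul, smul_smul]
  congr 1
  ring

lemma tau_add_right (x y y' : S.D) :
    S.tau μ ν x (y + y') = S.tau μ ν x y + S.tau μ ν x y' := by
  unfold tau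
  rw [← Finsupp.sum_add]
  refine Finsupp.sum_congr fun r _ => ?_
  rw [map_add]
  refine Finsupp.sum_add_index' (fun m => by simp) (fun m c c' => ?_)
  rw [← Finset.sum_add_distrib]
  refine Finset.sum_congr rfl fun a _ => ?_
  rw [← Finset.sum_add_distrib]
  refine Finset.sum_congr rfl fun b _ => ?_
  rw [Pi.add_apply, ← add_smul]
  congr 1
  ring

lemma tau_smul_right (t : ℂ) (x y : S.D) :
    S.tau μ ν x (t • y) = t • S.tau μ ν x y := by
  unfold tau
  rw [Finsupp.smul_sum]
  refine Finsupp.sum_congr fun r _ => ?_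
  rw [map_smul, Finsupp.sum_smul_index' (fun m => by simp), Finsupp.smul_sum]
  refine Finsupp.sum_congr fun m _ => ?_
  rw [Finset.smul_sum]
  refine Finset.sum_congr rfl fun a _ => ?_
  rw [Finset.smul_sum]
  refine Finset.sum_congr rfl fun b _ => ?_
  rw [Pi.smul_apply, smul_eq_mul, smul_smul]
  congr 1
  ring

/-- τ on basis elements -/
lemma tau_basis (r m : Idx N) (a b : Fin (N + 1)) :
    S.tau μ ν (S.dEl r a) (S.dEl m b) =
      (μ * (m a : ℂ) * (r b : ℂ) + ν * (r a : ℂ) * (m b : ℂ)) •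
        ∑ p : Fin (N + 1), ((m p : ℂ)) • S.kEl (r + m) p := by
  unfold tau dEl
  rw [LinearEquiv.apply_symm_apply, LinearEquiv.apply_symm_apply,
    Finsupp.sum_single_index (by simp), Finsupp.sum_single_index (by simp)]
  simp [Pi.single_apply, ite_mul, mul_ite, ite_smul, Finset.sum_ite_eq']

/-- the fundamental relation in K: Σ_p s_p t^s k_p = 0 (exactness) -/
lemma rel (s : Idx N) :
    ∑ p : Fin (N + 1), ((s p : ℂ)) • S.kEl s p = 0 := by
  unfold kEl
  have h1 : ∑ p : Fin (N + 1),
      ((s p : ℂ)) • S.eK.symm ((dR N).mkQ (Finsupp.single s (Pi.single p 1))) =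
      S.eK.symm ((dR N).mkQ
        (∑ p : Fin (N + 1), Finsupp.single s ((s p : ℂ) • (Pi.single p 1 : Fin (N + 1) → ℂ)))) := by
    rw [map_sum, map_sum]
    exact Finset.sum_congr rfl fun p _ => by
      rw [← map_smul, ← map_smul, Finsupp.smul_single]
  have h2 : ∑ p : Fin (N + 1), Finsupp.single s ((s p : ℂ) • (Pi.single p 1 : Fin (N + 1) → ℂ)) =
      Finsupp.single s (fun q => (s q : ℂ)) := by
    have h3 := map_sum (Finsupp.lsingle (R := ℂ) s)
      (fun p => (s p : ℂ) • (Pi.single p 1 : Fin (N + 1) → ℂ)) Finset.univ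
    simp only [Finsupp.lsingle_apply] at h3
    rw [← h3]
    congr 1
    funext q
    simp [Pi.single_apply, mul_ite, Finset.sum_ite_eq]
  have h4 : (dR N).mkQ (Finsupp.single s (fun q => (s q : ℂ))) = 0 := by
    rw [Submodule.mkQ_apply, Submodule.Quotient.mk_eq_zero]
    exact Submodule.subset_span ⟨s, rfl⟩
  calc ∑ p : Fin (N + 1), ((s p : ℂ)) •
        S.eK.symm (Submodule.Quotient.mk (Finsupp.single s (Pi.single p 1)))
      = S.eK.symm ((dR N).mkQ
          (∑ p : Fin (N + 1), Finsupp.single s ((s p : ℂ) • (Pi.single p 1 : Fin (N + 1) → ℂ)))) := h1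
    _ = 0 := by rw [h2, h4, map_zero]

lemma sum_fst_eq (r m : Idx N) :
    ∑ p : Fin (N + 1), ((r p : ℂ)) • S.kEl (r + m) p =
      - ∑ p : Fin (N + 1), ((m p : ℂ)) • S.kEl (r + m) p := by
  have h : ∑ p : Fin (N + 1), ((r p : ℂ)) • S.kEl (r + m) p +
      ∑ p : Fin (N + 1), ((m p : ℂ)) • S.kEl (r + m) p = 0 := by
    rw [← Finset.sum_add_distrib, ← S.rel (r + m)]
    exact Finset.sum_congr rfl fun p _ => by
      rw [← add_smul]
      congr 1
      push_cast [Pi.add_apply]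
      ring
  exact eq_neg_of_add_eq_zero_left h

lemma act_sum (hS : S.IsWitt) (r m : Idx N) (a : Fin (N + 1)) (f : Fin (N + 1) → ℂ) :
    ⁅S.dEl r a, ∑ p : Fin (N + 1), f p • S.kEl m p⁆ =
      ∑ p : Fin (N + 1), (f p * (m a : ℂ)) • S.kEl (r + m) p
        + f a • ∑ q : Fin (N + 1), ((r q : ℂ)) • S.kEl (r + m) q := by
  have h1 : ⁅S.dEl r a, ∑ p : Fin (N + 1), f p • S.kEl m p⁆ =
      ∑ p : Fin (N + 1), f p • ⁅S.dEl r a, S.kEl m p⁆ := by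
    rw [← LieModule.toEnd_apply_apply ℂ, map_sum]
    exact Finset.sum_congr rfl fun p _ => by
      rw [map_smul, LieModule.toEnd_apply_apply]
  have h2 : ∀ p, f p • ⁅S.dEl r a, S.kEl m p⁆ =
      (f p * (m a : ℂ)) • S.kEl (r + m) p +
        (if a = p then f p else 0) • ∑ q : Fin (N + 1), ((r q : ℂ)) • S.kEl (r + m) q := by
    intro p
    rw [hS.act, smul_add, smul_smul, smul_smul]
    congr 2 <;> first | rfl | (split_ifs <;> ring)
  rw [h1, Finset.sum_congr rfl fun p _ => h2 p, Finset.sum_add_distrib]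
  congr 1
  simp only [ite_smul, zero_smul]
  rw [Finset.sum_ite_eq]
  simp

/-- τ as a bundled bilinear map -/
def Bmap : S.D →ₗ[ℂ] S.D →ₗ[ℂ] S.K :=
  LinearMap.mk₂ ℂ (S.tau μ ν) (S.tau_add_left μ ν) (S.tau_smul_left μ ν)
    (S.tau_add_right μ ν) (S.tau_smul_right μ ν)

@[simp] lemma Bmap_apply (x y : S.D) : S.Bmap μ ν x y = S.tau μ ν x y := rfl

/-- basis of D given by the elements t^r d_a -/
def bD : Module.Basis ((_ : Idx N) × Fin (N + 1)) ℂ S.D :=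
  (Finsupp.basis fun _ => Pi.basisFun ℂ (Fin (N + 1))).map S.eD.symm

lemma bD_apply (i : (_ : Idx N) × Fin (N + 1)) : S.bD i = S.dEl i.1 i.2 := by
  unfold bD dEl
  rw [Module.Basis.map_apply]
  congr 1
  simp [Finsupp.coe_basis, Pi.basisFun_apply]

lemma mem_span (v : S.D) :
    v ∈ Submodule.span ℂ
      (Set.range fun i : (_ : Idx N) × Fin (N + 1) => S.dEl i.1 i.2) := by
  have h : (Set.range fun i : (_ : Idx N) × Fin (N + 1) => S.dEl i.1 i.2) =
      Set.range S.bD := by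
    rw [show (fun i : (_ : Idx N) × Fin (N + 1) => S.dEl i.1 i.2) = ⇑S.bD from
      funext fun i => (S.bD_apply i).symm]
  rw [h, Module.Basis.span_eq]
  trivial

lemma tau_antisym (x y : S.D) : S.tau μ ν x y = - S.tau μ ν y x := by
  have hB : S.Bmap μ ν = - (S.Bmap μ ν).flip := by
    refine S.bD.ext fun i => S.bD.ext fun j => ?_
    simp only [LinearMap.neg_apply, LinearMap.flip_apply, bD_apply, Bmap_apply]
    rw [tau_basis, tau_basis, show j.1 + i.1 = i.1 + j.1 from by ring,
      S.sum_fst_eq i.1 j.1, smul_neg, neg_neg]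
    congr 1
    ring
  have h := LinearMap.congr_fun (LinearMap.congr_fun hB x) y
  simpa using h

set_option maxHeartbeats 1000000 in
lemma cocycle_basis (hS : S.IsWitt) (r m n : Idx N) (a b c : Fin (N + 1)) :
    ⁅S.dEl r a, S.tau μ ν (S.dEl m b) (S.dEl n c)⁆ +
      ⁅S.dEl m b, S.tau μ ν (S.dEl n c) (S.dEl r a)⁆ +
      ⁅S.dEl n c, S.tau μ ν (S.dEl r a) (S.dEl m b)⁆ =
    S.tau μ ν ⁅S.dEl r a, S.dEl m b⁆ (S.dEl n c) +
      S.tau μ ν ⁅S.dEl m b, S.dEl n c⁆ (S.dEl r a) +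
      S.tau μ ν ⁅S.dEl n c, S.dEl r a⁆ (S.dEl m b) := by
  have h1 : ⁅S.dEl r a, S.tau μ ν (S.dEl m b) (S.dEl n c)⁆ =
      ∑ p : Fin (N + 1),
        ((μ * (n b : ℂ) * (m c : ℂ) + ν * (m b : ℂ) * (n c : ℂ)) *
          (((m a : ℂ) + (n a : ℂ)) * (n p : ℂ) + (n a : ℂ) * (r p : ℂ))) •
        S.kEl (r + m + n) p := by
    rw [tau_basis, lie_smul, S.act_sum hS r (m + n) a fun p => ((n p : ℂ)),
      show r + (m + n) = r + m + n from by ring]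
    simp only [smul_add, Finset.smul_sum, smul_smul]
    rw [← Finset.sum_add_distrib]
    refine Finset.sum_congr rfl fun p _ => ?_
    rw [← add_smul]
    congr 1
    push_cast [Pi.add_apply]
    ring
  have h2 : ⁅S.dEl m b, S.tau μ ν (S.dEl n c) (S.dEl r a)⁆ =
      ∑ p : Fin (N + 1),
        ((μ * (r c : ℂ) * (n a : ℂ) + ν * (n c : ℂ) * (r a : ℂ)) *
          (((n b : ℂ) + (r b : ℂ)) * (r p : ℂ) + (r b : ℂ) * (m p : ℂ))) •
        S.kEl (r + m + n) p := by
    rw [tau_basis, lie_smul, S.act_sum hS m (n + r) b fun p => ((r p : ℂ)),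
      show m + (n + r) = r + m + n from by ring]
    simp only [smul_add, Finset.smul_sum, smul_smul]
    rw [← Finset.sum_add_distrib]
    refine Finset.sum_congr rfl fun p _ => ?_
    rw [← add_smul]
    congr 1
    push_cast [Pi.add_apply]
    ring
  have h3 : ⁅S.dEl n c, S.tau μ ν (S.dEl r a) (S.dEl m b)⁆ =
      ∑ p : Fin (N + 1),
        ((μ * (m a : ℂ) * (r b : ℂ) + ν * (r a : ℂ) * (m b : ℂ)) *
          (((r c : ℂ) + (m c : ℂ)) * (m p : ℂ) + (m c : ℂ) * (n p : ℂ))) •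
        S.kEl (r + m + n) p := by
    rw [tau_basis, lie_smul, S.act_sum hS n (r + m) c fun p => ((m p : ℂ)),
      show n + (r + m) = r + m + n from by ring]
    simp only [smul_add, Finset.smul_sum, smul_smul]
    rw [← Finset.sum_add_distrib]
    refine Finset.sum_congr rfl fun p _ => ?_
    rw [← add_smul]
    congr 1
    push_cast [Pi.add_apply]
    ring
  have h4 : S.tau μ ν ⁅S.dEl r a, S.dEl m b⁆ (S.dEl n c) =
      ∑ p : Fin (N + 1),
        (((m a : ℂ) * (μ * (n b : ℂ) * ((r c : ℂ) + (m c : ℂ)) +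
            ν * ((r b : ℂ) + (m b : ℂ)) * (n c : ℂ)) -
          (r b : ℂ) * (μ * (n a : ℂ) * ((r c : ℂ) + (m c : ℂ)) +
            ν * ((r a : ℂ) + (m a : ℂ)) * (n c : ℂ))) * (n p : ℂ)) •
        S.kEl (r + m + n) p := by
    rw [hS.br]
    simp only [← Bmap_apply, map_sub, map_smul, LinearMap.sub_apply, LinearMap.smul_apply]
    rw [Bmap_apply, Bmap_apply, tau_basis, tau_basis]
    simp only [Finset.smul_sum, smul_smul]
    rw [← Finset.sum_sub_distrib]
    refine Finset.sum_congr rfl fun p _ => ?_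
    rw [← sub_smul]
    congr 1
    push_cast [Pi.add_apply]
    ring
  have h5 : S.tau μ ν ⁅S.dEl m b, S.dEl n c⁆ (S.dEl r a) =
      ∑ p : Fin (N + 1),
        (((n b : ℂ) * (μ * (r c : ℂ) * ((m a : ℂ) + (n a : ℂ)) +
            ν * ((m c : ℂ) + (n c : ℂ)) * (r a : ℂ)) -
          (m c : ℂ) * (μ * (r b : ℂ) * ((m a : ℂ) + (n a : ℂ)) +
            ν * ((m b : ℂ) + (n b : ℂ)) * (r a : ℂ))) * (r p : ℂ)) •
        S.kEl (r + m + n) p := by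
    rw [hS.br]
    simp only [← Bmap_apply, map_sub, map_smul, LinearMap.sub_apply, LinearMap.smul_apply]
    rw [Bmap_apply, Bmap_apply, tau_basis, tau_basis,
      show m + n + r = r + m + n from by ring]
    simp only [Finset.smul_sum, smul_smul]
    rw [← Finset.sum_sub_distrib]
    refine Finset.sum_congr rfl fun p _ => ?_
    rw [← sub_smul]
    congr 1
    push_cast [Pi.add_apply]
    ring
  have h6 : S.tau μ ν ⁅S.dEl n c, S.dEl r a⁆ (S.dEl m b) =
      ∑ p : Fin (N + 1),
        (((r c : ℂ) * (μ * (m a : ℂ) * ((n b : ℂ) + (r b : ℂ)) +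
            ν * ((n a : ℂ) + (r a : ℂ)) * (m b : ℂ)) -
          (n a : ℂ) * (μ * (m c : ℂ) * ((n b : ℂ) + (r b : ℂ)) +
            ν * ((n c : ℂ) + (r c : ℂ)) * (m b : ℂ))) * (m p : ℂ)) •
        S.kEl (r + m + n) p := by
    rw [hS.br]
    simp only [← Bmap_apply, map_sub, map_smul, LinearMap.sub_apply, LinearMap.smul_apply]
    rw [Bmap_apply, Bmap_apply, tau_basis, tau_basis,
      show n + r + m = r + m + n from by ring]
    simp only [Finset.smul_sum, smul_smul]
    rw [← Finset.sum_sub_distrib]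
    refine Finset.sum_congr rfl fun p _ => ?_
    rw [← sub_smul]
    congr 1
    push_cast [Pi.add_apply]
    ring
  have h0 : ∑ p : Fin (N + 1),
      ((μ * (n a : ℂ) * (n b : ℂ) * (m c : ℂ) + ν * (n a : ℂ) * (m b : ℂ) * (n c : ℂ) +
        μ * (n a : ℂ) * (r b : ℂ) * (r c : ℂ) + ν * (r a : ℂ) * (r b : ℂ) * (n c : ℂ) -
        μ * (m a : ℂ) * (n b : ℂ) * (r c : ℂ) + μ * (m a : ℂ) * (m c : ℂ) * (r b : ℂ) +
        μ * (n a : ℂ) * (m c : ℂ) * (r b : ℂ) + ν * (r a : ℂ) * (m b : ℂ) * (m c : ℂ)) *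
        ((r p : ℂ) + (m p : ℂ) + (n p : ℂ))) • S.kEl (r + m + n) p = 0 := by
    have hrel := S.rel (r + m + n)
    have hstep : ∑ p : Fin (N + 1),
        ((μ * (n a : ℂ) * (n b : ℂ) * (m c : ℂ) + ν * (n a : ℂ) * (m b : ℂ) * (n c : ℂ) +
        μ * (n a : ℂ) * (r b : ℂ) * (r c : ℂ) + ν * (r a : ℂ) * (r b : ℂ) * (n c : ℂ) -
        μ * (m a : ℂ) * (n b : ℂ) * (r c : ℂ) + μ * (m a : ℂ) * (m c : ℂ) * (r b : ℂ) +
        μ * (n a : ℂ) * (m c : ℂ) * (r b : ℂ) + ν * (r a : ℂ) * (m b : ℂ) * (m c : ℂ)) *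
          ((r p : ℂ) + (m p : ℂ) + (n p : ℂ))) • S.kEl (r + m + n) p =
        (μ * (n a : ℂ) * (n b : ℂ) * (m c : ℂ) + ν * (n a : ℂ) * (m b : ℂ) * (n c : ℂ) +
        μ * (n a : ℂ) * (r b : ℂ) * (r c : ℂ) + ν * (r a : ℂ) * (r b : ℂ) * (n c : ℂ) -
        μ * (m a : ℂ) * (n b : ℂ) * (r c : ℂ) + μ * (m a : ℂ) * (m c : ℂ) * (r b : ℂ) +
        μ * (n a : ℂ) * (m c : ℂ) * (r b : ℂ) + ν * (r a : ℂ) * (m b : ℂ) * (m c : ℂ)) •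
          ∑ p : Fin (N + 1), (((r + m + n) p : ℂ)) • S.kEl (r + m + n) p := by
      rw [Finset.smul_sum]
      refine Finset.sum_congr rfl fun p _ => ?_
      rw [smul_smul]
      congr 1
      push_cast [Pi.add_apply]
      ring
    rw [hstep, hrel, smul_zero]
  rw [h1, h2, h3, h4, h5, h6, ← sub_eq_zero]
  simp only [← Finset.sum_add_distrib]
  rw [← Finset.sum_sub_distrib]
  simp only [← add_smul, ← sub_smul]
  refine Eq.trans (Finset.sum_congr rfl fun p _ => ?_) h0
  congr 1
  ring

lemma tau_zero_left (y : S.D) : S.tau μ ν 0 y = 0 := by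
  rw [← S.Bmap_apply μ ν, map_zero, LinearMap.zero_apply]

lemma tau_zero_right (x : S.D) : S.tau μ ν x 0 = 0 := by
  rw [← S.Bmap_apply μ ν, map_zero]

lemma cocycle_aux2 (hS : S.IsWitt) (r m : Idx N) (a b : Fin (N + 1)) (z : S.D) :
    ⁅S.dEl r a, S.tau μ ν (S.dEl m b) z⁆ + ⁅S.dEl m b, S.tau μ ν z (S.dEl r a)⁆ +
      ⁅z, S.tau μ ν (S.dEl r a) (S.dEl m b)⁆ =
    S.tau μ ν ⁅S.dEl r a, S.dEl m b⁆ z + S.tau μ ν ⁅S.dEl m b, z⁆ (S.dEl r a) +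
      S.tau μ ν ⁅z, S.dEl r a⁆ (S.dEl m b) := by
  refine Submodule.span_induction
    (p := fun z _ =>
      ⁅S.dEl r a, S.tau μ ν (S.dEl m b) z⁆ + ⁅S.dEl m b, S.tau μ ν z (S.dEl r a)⁆ +
        ⁅z, S.tau μ ν (S.dEl r a) (S.dEl m b)⁆ =
      S.tau μ ν ⁅S.dEl r a, S.dEl m b⁆ z + S.tau μ ν ⁅S.dEl m b, z⁆ (S.dEl r a) +
        S.tau μ ν ⁅z, S.dEl r a⁆ (S.dEl m b))
    ?_ ?_ ?_ ?_ (S.mem_span z)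
  · rintro _ ⟨i, rfl⟩
    exact S.cocycle_basis μ ν hS r m i.1 a b i.2
  · simp [tau_zero_left, tau_zero_right]
  · intro u v _ _ h₁ h₂
    have h := congrArg₂ (· + ·) h₁ h₂
    simp only [lie_add, add_lie, tau_add_left, tau_add_right]
    refine Eq.trans (Eq.trans ?_ h) ?_ <;> abel
  · intro t u _ h
    have h' := congrArg (t • ·) h
    simp only [smul_add] at h'
    simp only [lie_smul, smul_lie, tau_smul_left, tau_smul_right]
    refine Eq.trans (Eq.trans ?_ h') ?_ <;> abel

lemma cocycle_aux1 (hS : S.IsWitt) (r : Idx N) (a : Fin (N + 1)) (y z : S.D) :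
    ⁅S.dEl r a, S.tau μ ν y z⁆ + ⁅y, S.tau μ ν z (S.dEl r a)⁆ +
      ⁅z, S.tau μ ν (S.dEl r a) y⁆ =
    S.tau μ ν ⁅S.dEl r a, y⁆ z + S.tau μ ν ⁅y, z⁆ (S.dEl r a) +
      S.tau μ ν ⁅z, S.dEl r a⁆ y := by
  refine Submodule.span_induction
    (p := fun y _ =>
      ⁅S.dEl r a, S.tau μ ν y z⁆ + ⁅y, S.tau μ ν z (S.dEl r a)⁆ +
        ⁅z, S.tau μ ν (S.dEl r a) y⁆ =
      S.tau μ ν ⁅S.dEl r a, y⁆ z + S.tau μ ν ⁅y, z⁆ (S.dEl r a) +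
        S.tau μ ν ⁅z, S.dEl r a⁆ y)
    ?_ ?_ ?_ ?_ (S.mem_span y)
  · rintro _ ⟨i, rfl⟩
    exact S.cocycle_aux2 μ ν hS r i.1 a i.2 z
  · simp [tau_zero_left, tau_zero_right]
  · intro u v _ _ h₁ h₂
    have h := congrArg₂ (· + ·) h₁ h₂
    simp only [lie_add, add_lie, tau_add_left, tau_add_right]
    refine Eq.trans (Eq.trans ?_ h) ?_ <;> abel
  · intro t u _ h
    have h' := congrArg (t • ·) h
    simp only [smul_add] at h'
    simp only [lie_smul, smul_lie, tau_smul_left, tau_smul_right]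
    refine Eq.trans (Eq.trans ?_ h') ?_ <;> abel

lemma cocycle (hS : S.IsWitt) (x y z : S.D) :
    ⁅x, S.tau μ ν y z⁆ + ⁅y, S.tau μ ν z x⁆ + ⁅z, S.tau μ ν x y⁆ =
    S.tau μ ν ⁅x, y⁆ z + S.tau μ ν ⁅y, z⁆ x + S.tau μ ν ⁅z, x⁆ y := by
  refine Submodule.span_induction
    (p := fun x _ =>
      ⁅x, S.tau μ ν y z⁆ + ⁅y, S.tau μ ν z x⁆ + ⁅z, S.tau μ ν x y⁆ =
      S.tau μ ν ⁅x, y⁆ z + S.tau μ ν ⁅y, z⁆ x + S.tau μ ν ⁅z, x⁆ y)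
    ?_ ?_ ?_ ?_ (S.mem_span x)
  · rintro _ ⟨i, rfl⟩
    exact S.cocycle_aux1 μ ν hS i.1 i.2 y z
  · simp [tau_zero_left, tau_zero_right]
  · intro u v _ _ h₁ h₂
    have h := congrArg₂ (· + ·) h₁ h₂
    simp only [lie_add, add_lie, tau_add_left, tau_add_right]
    refine Eq.trans (Eq.trans ?_ h) ?_ <;> abel
  · intro t u _ h
    have h' := congrArg (t • ·) h
    simp only [smul_add] at h'
    simp only [lie_smul, smul_lie, tau_smul_left, tau_smul_right]
    refine Eq.trans (Eq.trans ?_ h') ?_ <;> abel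

end WittSetup


/-- τ = μτ₁ + ντ₂ is a K-valued 2-cocycle on D. -/
theorem statement1 (N : ℕ) (hN : 1 ≤ N) (μ ν : ℂ)
    (S : WittSetup N) (hS : S.IsWitt) :
    -- τ is bilinear
    (∀ x x' y : S.D, S.tau μ ν (x + x') y = S.tau μ ν x y + S.tau μ ν x' y) ∧
    (∀ (t : ℂ) (x y : S.D), S.tau μ ν (t • x) y = t • S.tau μ ν x y) ∧
    (∀ x y y' : S.D, S.tau μ ν x (y + y') = S.tau μ ν x y + S.tau μ ν x y') ∧
    (∀ (t : ℂ) (x y : S.D), S.tau μ ν x (t • y) = t • S.tau μ ν x y) ∧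
    -- τ is antisymmetric (in K)
    (∀ x y : S.D, S.tau μ ν x y = -S.tau μ ν y x) ∧
    -- the 2-cocycle identity
    (∀ x y z : S.D,
      ⁅x, S.tau μ ν y z⁆ + ⁅y, S.tau μ ν z x⁆ + ⁅z, S.tau μ ν x y⁆ =
        S.tau μ ν ⁅x, y⁆ z + S.tau μ ν ⁅y, z⁆ x + S.tau μ ν ⁅z, x⁆ y) := by
  refine ⟨S.tau_add_left μ ν, S.tau_smul_left μ ν, S.tau_add_right μ ν,
    S.tau_smul_right μ ν, S.tau_antisym μ ν, S.cocycle μ ν hS⟩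

end

end ToroidalPaper1
end

section
/- For all μ, ν ∈ ℂ, the elements k₀, k₁, …, k_N are linearly independent in g(μ,ν), and the center of the Lie algebra g(μ,ν) is exactly their span Z = span{k₀, k₁, …, k_N}. -/
namespace ToroidalPaper

noncomputable section

/-- multi-indices r ∈ ℤ^{N+1} -/
abbrev Idx (N : ℕ) := Fin (N + 1) → ℤ

/-- The model for the 1-forms Ω¹_R: the free module on k₀,…,k_N over R,
written in the monomial basis t^r k_p. -/
abbrev OmegaR (N : ℕ) := Idx N →₀ (Fin (N + 1) → ℂ)

/-- The subspace d(R) ⊆ Ω¹_R of exact forms: d(t^r) = Σ_p r_p t^r k_p. -/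
def dR (N : ℕ) : Submodule ℂ (OmegaR N) :=
  Submodule.span ℂ {w : OmegaR N | ∃ r : Idx N, w = Finsupp.single r fun p => (r p : ℂ)}

/-- K = Ω¹_R / d(R) -/
abbrev Kmod (N : ℕ) := OmegaR N ⧸ dR N

variable (N : ℕ) (g : Type) [LieRing g] [LieAlgebra ℂ g]

/-- The underlying vector space of the full toroidal Lie algebra:
(R ⊗ ġ) ⊕ K ⊕ D, where R ⊗ ġ is modeled as `Idx N →₀ g` (coefficient of t^r)
and D as `Idx N →₀ (Fin (N+1) → ℂ)` (coefficients of t^r d_p). -/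
abbrev Carrier := (Idx N →₀ g) × Kmod N × (Idx N →₀ (Fin (N + 1) → ℂ))

/-- A realization of the vector space (R⊗ġ) ⊕ K ⊕ D as a Lie algebra:
a Lie algebra `G` together with a linear identification with the model. -/
structure Tor where
  G : Type
  [instLieRing : LieRing G]
  [instLieAlgebra : LieAlgebra ℂ G]
  e : G ≃ₗ[ℂ] Carrier N g

attribute [instance] Tor.instLieRing Tor.instLieAlgebra

namespace Tor

variable {N g}
variable (T : Tor N g)

/-- the element t^r ⊗ x of R ⊗ ġ -/
def tg (r : Idx N) (x : g) : T.G := T.e.symm (Finsupp.single r x, 0, 0)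

/-- the element t^r k_p of K -/
def k (r : Idx N) (p : Fin (N + 1)) : T.G :=
  T.e.symm (0, Submodule.Quotient.mk (p := dR N) (Finsupp.single r (Pi.single p 1)), 0)

/-- the element t^r d_p of D -/
def d (r : Idx N) (p : Fin (N + 1)) : T.G :=
  T.e.symm (0, 0, Finsupp.single r (Pi.single p 1))

/-- t^m · d(t^r) = Σ_p r_p t^{r+m} k_p -/
def kSum (r m : Idx N) : T.G := ∑ p : Fin (N + 1), (r p : ℂ) • T.k (r + m) p

/-- The bracket relations of the full toroidal Lie algebra g(μ,ν). -/
structure IsToroidal (B : g →ₗ[ℂ] g →ₗ[ℂ] ℂ) (μ ν : ℂ) : Prop where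
  br_gg : ∀ (r m : Idx N) (x y : g),
    ⁅T.tg r x, T.tg m y⁆ = T.tg (r + m) ⁅x, y⁆ + B x y • T.kSum r m
  br_kg : ∀ (r m : Idx N) (p : Fin (N + 1)) (x : g), ⁅T.k r p, T.tg m x⁆ = 0
  br_kk : ∀ (r m : Idx N) (p q : Fin (N + 1)), ⁅T.k r p, T.k m q⁆ = 0
  br_dg : ∀ (r m : Idx N) (a : Fin (N + 1)) (x : g),
    ⁅T.d r a, T.tg m x⁆ = (m a : ℂ) • T.tg (r + m) x
  br_dk : ∀ (r m : Idx N) (a b : Fin (N + 1)),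
    ⁅T.d r a, T.k m b⁆ = (m a : ℂ) • T.k (r + m) b
      + (if a = b then (1 : ℂ) else 0) • T.kSum r m
  br_dd : ∀ (r m : Idx N) (a b : Fin (N + 1)),
    ⁅T.d r a, T.d m b⁆ = (m a : ℂ) • T.d (r + m) b - (r b : ℂ) • T.d (r + m) a
      + (μ * (m a : ℂ) * (r b : ℂ) + ν * (r a : ℂ) * (m b : ℂ)) •
          (∑ p : Fin (N + 1), (m p : ℂ) • T.k (r + m) p)

end Tor

end

end ToroidalPaper
namespace ToroidalPaper

noncomputable section Aux

open Finsupp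

/-- the scaling operator w ↦ (r ↦ (r b) • w r) on finitely supported functions -/
def scaleF {N : ℕ} {M : Type*} [AddCommGroup M] [Module ℂ M] (b : Fin (N + 1)) :
    (Idx N →₀ M) →ₗ[ℂ] (Idx N →₀ M) :=
  Finsupp.lsum ℂ (fun r => Finsupp.lsingle r ∘ₗ ((r b : ℂ) • LinearMap.id))

lemma scaleF_single {N : ℕ} {M : Type*} [AddCommGroup M] [Module ℂ M] (b : Fin (N + 1))
    (m : Idx N) (v : M) :
    scaleF b (Finsupp.single m v) = Finsupp.single m ((m b : ℂ) • v) := by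
  simp [scaleF]

lemma scaleF_apply {N : ℕ} {M : Type*} [AddCommGroup M] [Module ℂ M] (b : Fin (N + 1))
    (w : Idx N →₀ M) (s : Idx N) :
    scaleF b w s = (s b : ℂ) • w s := by
  induction w using Finsupp.induction_linear with
  | zero => simp
  | add f g hf hg => simp [hf, hg]
  | single m v =>
    rw [scaleF_single]
    rcases eq_or_ne m s with h | h
    · subst h; simp
    · simp [Finsupp.single_apply, h]

lemma scaleF_mem_dR {N : ℕ} (b : Fin (N + 1)) {w : OmegaR N} (hw : w ∈ dR N) :
    scaleF b w ∈ dR N := by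
  induction hw using Submodule.span_induction with
  | mem w hw =>
    obtain ⟨r, rfl⟩ := hw
    rw [scaleF_single, ← Finsupp.smul_single]
    exact Submodule.smul_mem _ _ (Submodule.subset_span ⟨r, rfl⟩)
  | zero => simp
  | add w₁ w₂ _ _ h₁ h₂ => rw [map_add]; exact Submodule.add_mem _ h₁ h₂
  | smul c w _ h => rw [map_smul]; exact Submodule.smul_mem _ _ h

/-- the induced scaling operator on K -/
def scaleK {N : ℕ} (b : Fin (N + 1)) : Kmod N →ₗ[ℂ] Kmod N :=
  Submodule.mapQ (dR N) (dR N) (scaleF b) (fun _ hw => scaleF_mem_dR b hw)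

lemma scaleK_mk {N : ℕ} (b : Fin (N + 1)) (w : OmegaR N) :
    scaleK b (Submodule.Quotient.mk (p := dR N) w)
      = Submodule.Quotient.mk (p := dR N) (scaleF b w) :=
  Submodule.mapQ_apply _ _ _ w

lemma dR_mem_apply {N : ℕ} {w : OmegaR N} (hw : w ∈ dR N) (s : Idx N) :
    ∃ c : ℂ, w s = c • fun p => (s p : ℂ) := by
  induction hw using Submodule.span_induction with
  | mem w hw =>
    obtain ⟨r, rfl⟩ := hw
    rcases eq_or_ne r s with h | h
    · subst h; exact ⟨1, by simp⟩
    · exact ⟨0, by simp [Finsupp.single_apply, h]⟩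
  | zero => exact ⟨0, by simp⟩
  | add w₁ w₂ _ _ h₁ h₂ =>
    obtain ⟨c₁, hc₁⟩ := h₁; obtain ⟨c₂, hc₂⟩ := h₂
    exact ⟨c₁ + c₂, by simp [hc₁, hc₂, add_smul]⟩
  | smul c w _ h =>
    obtain ⟨c', hc'⟩ := h
    exact ⟨c * c', by simp [hc', smul_smul]⟩

lemma mem_dR_of {N : ℕ} {w : OmegaR N}
    (h : ∀ s : Idx N, ∃ c : ℂ, w s = c • fun p => (s p : ℂ)) : w ∈ dR N := by
  rw [← Finsupp.sum_single w]
  refine Submodule.finsuppSum_mem _ _ _ _ (fun r _ => ?_)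
  obtain ⟨c, hc⟩ := h r
  rw [hc, ← Finsupp.smul_single]
  exact Submodule.smul_mem _ _ (Submodule.subset_span ⟨r, rfl⟩)

end Aux

end ToroidalPaper
namespace ToroidalPaper

noncomputable section Aux2

open Finsupp

variable {N : ℕ} {g : Type} [LieRing g] [LieAlgebra ℂ g] (T : Tor N g)

lemma tg_smul (r : Idx N) (c : ℂ) (x : g) : T.tg r (c • x) = c • T.tg r x := by
  rw [Tor.tg, Tor.tg, ← map_smul, ← Finsupp.smul_single]
  simp [Prod.smul_mk]

lemma tg_eq_zero_iff (r : Idx N) (x : g) : T.tg r x = 0 ↔ x = 0 := by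
  rw [Tor.tg]
  rw [(LinearEquiv.map_eq_zero_iff _)]
  constructor
  · intro h
    have h1 : Finsupp.single r x = 0 := congrArg Prod.fst h
    exact (Finsupp.single_eq_zero).1 h1
  · intro h; simp [h]

lemma k_smul_eq (r : Idx N) (p : Fin (N + 1)) (c : ℂ) :
    c • T.k r p = T.e.symm (0, Submodule.Quotient.mk (p := dR N)
      (Finsupp.single r (Pi.single p c)), 0) := by
  rw [Tor.k, ← map_smul]
  congr 1
  have hps : c • (Pi.single p (1 : ℂ) : Fin (N + 1) → ℂ) = Pi.single p c := by
    ext q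
    rcases eq_or_ne q p with h | h <;> simp [Pi.single_apply, h]
  rw [Prod.smul_mk, Prod.smul_mk, smul_zero, smul_zero,
    ← Submodule.Quotient.mk_smul, Finsupp.smul_single, hps]

lemma d_smul_eq (r : Idx N) (p : Fin (N + 1)) (c : ℂ) :
    c • T.d r p = T.e.symm (0, 0, Finsupp.single r (Pi.single p c)) := by
  rw [Tor.d, ← map_smul]
  congr 1
  have hps : c • (Pi.single p (1 : ℂ) : Fin (N + 1) → ℂ) = Pi.single p c := by
    ext q
    rcases eq_or_ne q p with h | h <;> simp [Pi.single_apply, h]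
  rw [Prod.smul_mk, Prod.smul_mk, smul_zero, smul_zero, Finsupp.smul_single, hps]

/-- a sum of k's is the class of a single -/
lemma sum_k (r : Idx N) (v : Fin (N + 1) → ℂ) :
    ∑ p : Fin (N + 1), v p • T.k r p
      = T.e.symm (0, Submodule.Quotient.mk (p := dR N) (Finsupp.single r v), 0) := by
  rw [Finset.sum_congr rfl fun p _ => k_smul_eq T r p (v p), ← map_sum]
  congr 1
  refine Prod.ext ?_ (Prod.ext ?_ ?_)
  · rw [Prod.fst_sum]; simp
  · rw [Prod.snd_sum, Prod.fst_sum]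
    simp only [← Submodule.mkQ_apply, ← map_sum (Submodule.mkQ (dR N)),
      ← Finsupp.lsingle_apply (R := ℂ), ← map_sum (Finsupp.lsingle r)]
    rw [Finset.univ_sum_single]
  · rw [Prod.snd_sum, Prod.snd_sum]; simp

lemma sum_d (r : Idx N) (v : Fin (N + 1) → ℂ) :
    ∑ p : Fin (N + 1), v p • T.d r p
      = T.e.symm (0, 0, Finsupp.single r v) := by
  rw [Finset.sum_congr rfl fun p _ => d_smul_eq T r p (v p), ← map_sum]
  congr 1
  refine Prod.ext ?_ (Prod.ext ?_ ?_)
  · rw [Prod.fst_sum]; simp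
  · rw [Prod.snd_sum, Prod.fst_sum]; simp
  · rw [Prod.snd_sum, Prod.snd_sum]
    simp only [← Finsupp.lsingle_apply (R := ℂ), ← map_sum (Finsupp.lsingle r)]
    rw [Finset.univ_sum_single]

lemma kSum_right_zero (r : Idx N) : T.kSum r 0 = 0 := by
  rw [Tor.kSum]
  rw [Finset.sum_congr rfl fun p _ => by rw [add_zero r]]
  rw [sum_k]
  have h : Submodule.Quotient.mk (p := dR N)
      (Finsupp.single r (fun p => (r p : ℂ))) = 0 := by
    rw [Submodule.Quotient.mk_eq_zero]
    exact Submodule.subset_span ⟨r, rfl⟩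
  rw [h]
  simp

lemma kSum_left_zero (m : Idx N) : T.kSum 0 m = 0 := by
  rw [Tor.kSum]
  simp

end Aux2

end ToroidalPaper
namespace ToroidalPaper

noncomputable section Aux3

open Finsupp

variable {N : ℕ} {g : Type} [LieRing g] [LieAlgebra ℂ g] (T : Tor N g)

/-- the set of generators of g(μ,ν) as a vector space -/
def gens : Set T.G :=
  (Set.range fun rx : Idx N × g => T.tg rx.1 rx.2)
    ∪ (Set.range fun rp : Idx N × Fin (N + 1) => T.k rp.1 rp.2)
    ∪ (Set.range fun rp : Idx N × Fin (N + 1) => T.d rp.1 rp.2)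

lemma mem_span_gens (x : T.G) : x ∈ Submodule.span ℂ (gens T) := by
  have hx : x = T.e.symm ((T.e x).1, 0, 0) + T.e.symm (0, (T.e x).2.1, 0)
      + T.e.symm (0, 0, (T.e x).2.2) := by
    rw [← map_add, ← map_add]
    have : ((T.e x).1, (0 : Kmod N), (0 : Idx N →₀ (Fin (N+1) → ℂ)))
        + (0, (T.e x).2.1, 0) + (0, 0, (T.e x).2.2) = T.e x := by
      refine Prod.ext ?_ (Prod.ext ?_ ?_) <;> simp
    rw [this, LinearEquiv.symm_apply_apply]
  rw [hx]
  refine Submodule.add_mem _ (Submodule.add_mem _ ?_ ?_) ?_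
  · -- R ⊗ g part
    generalize (T.e x).1 = a
    induction a using Finsupp.induction_linear with
    | zero => rw [show T.e.symm (0, 0, 0) = 0 from map_zero _]; exact Submodule.zero_mem _
    | add f h hf hh =>
      have : T.e.symm ((f + h : Idx N →₀ g), (0 : Kmod N),
          (0 : Idx N →₀ (Fin (N+1) → ℂ)))
          = T.e.symm (f, 0, 0) + T.e.symm (h, 0, 0) := by
        rw [← map_add]; congr 1; refine Prod.ext ?_ (Prod.ext ?_ ?_) <;> simp
      rw [this]; exact Submodule.add_mem _ hf hh
    | single r y =>
      exact Submodule.subset_span (Or.inl (Or.inl ⟨(r, y), rfl⟩))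
  · -- K part
    obtain ⟨w, hw⟩ := Submodule.Quotient.mk_surjective (dR N) (T.e x).2.1
    rw [← hw]
    clear hw
    induction w using Finsupp.induction_linear with
    | zero => simp; rw [show T.e.symm (0, 0, 0) = 0 from map_zero _]; exact Submodule.zero_mem _
    | add f h hf hh =>
      have : T.e.symm ((0 : Idx N →₀ g),
          Submodule.Quotient.mk (p := dR N) (f + h),
          (0 : Idx N →₀ (Fin (N+1) → ℂ)))
          = T.e.symm (0, Submodule.Quotient.mk (p := dR N) f, 0)
            + T.e.symm (0, Submodule.Quotient.mk (p := dR N) h, 0) := by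
        rw [← map_add]; congr 1
        refine Prod.ext ?_ (Prod.ext ?_ ?_) <;>
          simp [Submodule.Quotient.mk_add]
      rw [this]; exact Submodule.add_mem _ hf hh
    | single r v =>
      rw [← sum_k]
      exact Submodule.sum_mem _ fun p _ => Submodule.smul_mem _ _
        (Submodule.subset_span (Or.inl (Or.inr ⟨(r, p), rfl⟩)))
  · -- D part
    generalize (T.e x).2.2 = a
    induction a using Finsupp.induction_linear with
    | zero => rw [show T.e.symm (0, 0, 0) = 0 from map_zero _]; exact Submodule.zero_mem _
    | add f h hf hh =>
      have : T.e.symm ((0 : Idx N →₀ g), (0 : Kmod N), f + h)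
          = T.e.symm (0, 0, f) + T.e.symm (0, 0, h) := by
        rw [← map_add]; congr 1; refine Prod.ext ?_ (Prod.ext ?_ ?_) <;> simp
      rw [this]; exact Submodule.add_mem _ hf hh
    | single r v =>
      rw [← sum_d]
      exact Submodule.sum_mem _ fun p _ => Submodule.smul_mem _ _
        (Submodule.subset_span (Or.inr ⟨(r, p), rfl⟩))

variable {B : g →ₗ[ℂ] g →ₗ[ℂ] ℂ} {μ ν : ℂ} {T} (hT : T.IsToroidal B μ ν)

include hT

/-- the degree-zero k's are central -/
lemma k_zero_central (j : Fin (N + 1)) (y : T.G) : ⁅T.k 0 j, y⁆ = 0 := by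
  have hy := mem_span_gens T y
  induction hy using Submodule.span_induction with
  | mem y hy =>
    rcases hy with (⟨⟨r, x⟩, rfl⟩ | ⟨⟨r, p⟩, rfl⟩) | ⟨⟨r, p⟩, rfl⟩
    · exact hT.br_kg 0 r j x
    · exact hT.br_kk 0 r j p
    · rw [← lie_skew, hT.br_dk r 0 p j]
      have h0 : ((0 : Idx N) p : ℂ) = 0 := by norm_num
      rw [h0, kSum_right_zero]
      simp
  | zero => exact lie_zero _
  | add a b _ _ ha hb => rw [lie_add, ha, hb, add_zero]
  | smul c a _ ha => rw [lie_smul, ha, smul_zero]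

end Aux3

end ToroidalPaper
namespace ToroidalPaper

noncomputable section Aux4

open Finsupp

variable {N : ℕ} {g : Type} [LieRing g] [LieAlgebra ℂ g]

/-- scaling by m_b on the whole carrier -/
def Db (b : Fin (N + 1)) : Carrier N g →ₗ[ℂ] Carrier N g :=
  (scaleF b).prodMap ((scaleK b).prodMap (scaleF b))

variable {T : Tor N g} {B : g →ₗ[ℂ] g →ₗ[ℂ] ℂ} {μ ν : ℂ} (hT : T.IsToroidal B μ ν)

include hT

lemma d_zero_bracket (b : Fin (N + 1)) (x : T.G) :
    ⁅T.d 0 b, x⁆ = T.e.symm (Db b (T.e x)) := by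
  have hx := mem_span_gens T x
  induction hx using Submodule.span_induction with
  | mem y hy =>
    rcases hy with (⟨⟨m, z⟩, rfl⟩ | ⟨⟨m, q⟩, rfl⟩) | ⟨⟨m, q⟩, rfl⟩
    · -- tg
      show ⁅T.d 0 b, T.tg m z⁆ = T.e.symm (Db b (T.e (T.tg m z)))
      rw [hT.br_dg 0 m b z, zero_add]
      simp only [Tor.tg]
      rw [LinearEquiv.apply_symm_apply, ← map_smul]
      congr 1
      rw [Db, LinearMap.prodMap_apply, LinearMap.prodMap_apply]
      rw [scaleF_single]
      refine Prod.ext ?_ (Prod.ext ?_ ?_)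
      · simp [Finsupp.smul_single]
      · simp [scaleK]
      · simp
    · -- k
      show ⁅T.d 0 b, T.k m q⁆ = T.e.symm (Db b (T.e (T.k m q)))
      rw [hT.br_dk 0 m b q, kSum_left_zero, smul_zero, add_zero, zero_add]
      simp only [Tor.k]
      rw [LinearEquiv.apply_symm_apply, ← map_smul]
      congr 1
      rw [Db, LinearMap.prodMap_apply, LinearMap.prodMap_apply]
      rw [scaleK_mk, scaleF_single]
      refine Prod.ext ?_ (Prod.ext ?_ ?_)
      · simp
      · simp only [Prod.smul_snd, Prod.smul_fst, ← Submodule.Quotient.mk_smul,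
          Finsupp.smul_single]
      · simp
    · -- d
      show ⁅T.d 0 b, T.d m q⁆ = T.e.symm (Db b (T.e (T.d m q)))
      rw [hT.br_dd 0 m b q]
      have h1 : ((0 : Idx N) q : ℂ) = 0 := by norm_num
      have h2 : ((0 : Idx N) b : ℂ) = 0 := by norm_num
      rw [h1, h2, zero_add]
      rw [mul_zero, mul_zero, zero_mul, add_zero, zero_smul, sub_zero, zero_smul, add_zero]
      simp only [Tor.d]
      rw [LinearEquiv.apply_symm_apply, ← map_smul]
      congr 1
      rw [Db, LinearMap.prodMap_apply, LinearMap.prodMap_apply]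
      rw [scaleF_single]
      refine Prod.ext ?_ (Prod.ext ?_ ?_)
      · simp
      · simp [scaleK]
      · simp [Finsupp.smul_single]
  | zero => simp
  | add a c _ _ ha hc => simp [lie_add, ha, hc]
  | smul c a _ ha => simp [lie_smul, ha]

end Aux4

end ToroidalPaper
namespace ToroidalPaper

noncomputable section Aux5

lemma sum_lie' {ι : Type*} {L : Type*} [LieRing L] (s : Finset ι) (f : ι → L) (y : L) :
    ⁅∑ i ∈ s, f i, y⁆ = ∑ i ∈ s, ⁅f i, y⁆ := by
  induction s using Finset.cons_induction with
  | empty => simp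
  | cons i s hi ih => rw [Finset.sum_cons, Finset.sum_cons, add_lie, ih]

variable {N : ℕ} {g : Type} [LieRing g] [LieAlgebra ℂ g]

lemma Db_apply (b : Fin (N + 1)) (z : Carrier N g) :
    Db b z = (scaleF b z.1, scaleK b z.2.1, scaleF b z.2.2) := rfl

variable (T : Tor N g)

lemma tg_add (r : Idx N) (x y : g) : T.tg r (x + y) = T.tg r x + T.tg r y := by
  rw [Tor.tg, Tor.tg, Tor.tg, ← map_add]
  congr 1
  refine Prod.ext ?_ (Prod.ext ?_ ?_) <;> simp [Finsupp.single_add]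

lemma tg_zero (r : Idx N) : T.tg r 0 = 0 := (tg_eq_zero_iff T r 0).2 rfl

end Aux5

end ToroidalPaper
namespace ToroidalPaper

/-- for all μ, ν ∈ ℂ, the elements k₀,…,k_N are linearly
independent in g(μ,ν), and the center of g(μ,ν) is exactly their span. -/
theorem statement2 (N : ℕ) (hN : 1 ≤ N) (g : Type) [LieRing g] [LieAlgebra ℂ g]
    [FiniteDimensional ℂ g] [LieAlgebra.IsSimple ℂ g]
    (B : g →ₗ[ℂ] g →ₗ[ℂ] ℂ)
    (hBsymm : ∀ x y : g, B x y = B y x)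
    (hBnondeg : ∀ x : g, (∀ y : g, B x y = 0) → x = 0)
    (hBinv : ∀ x y z : g, B ⁅x, y⁆ z = B x ⁅y, z⁆)
    (μ ν : ℂ) (T : Tor N g) (hT : T.IsToroidal B μ ν) :
    LinearIndependent ℂ (fun j : Fin (N + 1) => T.k 0 j) ∧
    (∀ x : T.G, (∀ y : T.G, ⁅x, y⁆ = 0) ↔
      x ∈ Submodule.span ℂ (Set.range fun j : Fin (N + 1) => T.k 0 j)) := by
  classical
  constructor
  · -- linear independence of the k j
    rw [Fintype.linearIndependent_iff]
    intro c hc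
    rw [sum_k] at hc
    have h1 : ((0 : Idx N →₀ g),
        Submodule.Quotient.mk (p := dR N) (Finsupp.single (0 : Idx N) c),
        (0 : Idx N →₀ (Fin (N + 1) → ℂ))) = 0 :=
      (LinearEquiv.map_eq_zero_iff _).1 hc
    have h2 : Finsupp.single (0 : Idx N) c ∈ dR N := by
      rw [← Submodule.Quotient.mk_eq_zero]
      exact congrArg (fun t => t.2.1) h1
    obtain ⟨c₀, hc₀⟩ := dR_mem_apply h2 0
    have hc' : c = 0 := by
      rw [Finsupp.single_eq_same] at hc₀
      rw [hc₀]
      funext p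
      simp
    intro j
    rw [hc']
    rfl
  · intro x
    constructor
    · intro hx
      -- x is central; show it lies in the span of the k 0 j
      have hNontriv : Nontrivial g := by
        by_contra h
        rw [not_nontrivial_iff_subsingleton] at h
        exact LieAlgebra.IsSimple.non_abelian (R := ℂ) (L := g)
          ⟨fun a b => Subsingleton.elim _ _⟩
      have hDb : ∀ b : Fin (N + 1), Db b (T.e x) = 0 := by
        intro b
        have h := d_zero_bracket hT b x
        have h0 : ⁅T.d 0 b, x⁆ = 0 := by
          rw [← lie_skew, hx (T.d 0 b), neg_zero]
        rw [h0] at h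
        exact (LinearEquiv.map_eq_zero_iff _).1 h.symm
      have hcomp : ∀ b : Fin (N + 1), scaleF b (T.e x).1 = 0
          ∧ scaleK b (T.e x).2.1 = 0 ∧ scaleF b (T.e x).2.2 = 0 := by
        intro b
        have h := hDb b
        rw [Db_apply, Prod.ext_iff, Prod.ext_iff] at h
        exact ⟨h.1, h.2.1, h.2.2⟩
      have hne : ∀ s : Idx N, s ≠ 0 → ∃ b, s b ≠ 0 := by
        intro s hs
        by_contra h
        push_neg at h
        exact hs (funext h)
      -- vanishing of nonzero-degree components
      have hFa : ∀ {M : Type} [AddCommGroup M] [Module ℂ M]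
          (v : Idx N →₀ M), (∀ b, scaleF b v = 0) →
          ∀ s : Idx N, s ≠ 0 → v s = 0 := by
        intro M _ _ v hv s hs
        obtain ⟨b, hb⟩ := hne s hs
        have h := congrArg (fun w => w s) (hv b)
        simp only [Finsupp.coe_zero, Pi.zero_apply] at h
        rw [scaleF_apply] at h
        rcases smul_eq_zero.mp h with h' | h'
        · exact absurd (by exact_mod_cast h') hb
        · exact h'
      have haeq : (T.e x).1 = Finsupp.single 0 ((T.e x).1 0) := by
        ext s
        rcases eq_or_ne s 0 with rfl | hs
        · simp
        · rw [hFa (T.e x).1 (fun b => (hcomp b).1) s hs, Finsupp.single_apply,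
            if_neg (fun h => hs h.symm)]
      have hDeq : (T.e x).2.2 = Finsupp.single 0 ((T.e x).2.2 0) := by
        ext s
        rcases eq_or_ne s 0 with rfl | hs
        · simp
        · rw [hFa (T.e x).2.2 (fun b => (hcomp b).2.2) s hs, Finsupp.single_apply,
            if_neg (fun h => hs h.symm)]
      obtain ⟨w, hw⟩ := Submodule.Quotient.mk_surjective (dR N) (T.e x).2.1
      have hκeq : (T.e x).2.1
          = Submodule.Quotient.mk (p := dR N) (Finsupp.single 0 (w 0)) := by
        rw [← hw, Submodule.Quotient.eq]
        apply mem_dR_of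
        intro s
        rcases eq_or_ne s 0 with rfl | hs
        · refine ⟨0, ?_⟩
          rw [Finsupp.sub_apply, Finsupp.single_eq_same, sub_self, zero_smul]
        · obtain ⟨b, hb⟩ := hne s hs
          have hmem : scaleF b w ∈ dR N := by
            have h := (hcomp b).2.1
            rw [← hw, scaleK_mk, Submodule.Quotient.mk_eq_zero] at h
            exact h
          obtain ⟨c, hc⟩ := dR_mem_apply hmem s
          rw [scaleF_apply] at hc
          have hsb : ((s b : ℤ) : ℂ) ≠ 0 := by
            simpa using hb
          refine ⟨((s b : ℤ) : ℂ)⁻¹ * c, ?_⟩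
          rw [Finsupp.sub_apply, Finsupp.single_apply, if_neg (fun h => hs h.symm),
            sub_zero]
          have : w s = ((s b : ℤ) : ℂ)⁻¹ • (((s b : ℤ) : ℂ) • w s) := by
            rw [smul_smul, inv_mul_cancel₀ hsb, one_smul]
          rw [this, hc, smul_smul]
      -- decompose x into degree-zero pieces
      have hxeq : x = T.tg 0 ((T.e x).1 0)
          + (∑ p : Fin (N + 1), (w 0) p • T.k 0 p)
          + ∑ p : Fin (N + 1), ((T.e x).2.2 0) p • T.d 0 p := by
        rw [sum_k, sum_d, Tor.tg, ← map_add, ← map_add]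
        conv_lhs => rw [← T.e.symm_apply_apply x]
        congr 1
        have : T.e x = ((T.e x).1, (T.e x).2.1, (T.e x).2.2) := rfl
        rw [this, haeq, hκeq, hDeq]
        refine Prod.ext ?_ (Prod.ext ?_ ?_) <;> simp
      -- bracket with tg elements
      have hbr : ∀ (m : Idx N) (z : g),
          ⁅(T.e x).1 0, z⁆
            + (∑ p : Fin (N + 1), ((T.e x).2.2 0) p * (m p : ℂ)) • z = 0 := by
        intro m z
        have h := hx (T.tg m z)
        rw [hxeq, add_lie, add_lie] at h
        rw [hT.br_gg 0 m ((T.e x).1 0) z, kSum_left_zero, smul_zero, add_zero,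
          zero_add] at h
        have hk0 : ⁅∑ p : Fin (N + 1), (w 0) p • T.k 0 p, T.tg m z⁆ = 0 := by
          rw [sum_lie']
          refine Finset.sum_eq_zero fun p _ => ?_
          rw [smul_lie, hT.br_kg 0 m p z, smul_zero]
        have hd0 : ⁅∑ p : Fin (N + 1), ((T.e x).2.2 0) p • T.d 0 p, T.tg m z⁆
            = (∑ p : Fin (N + 1), ((T.e x).2.2 0) p * (m p : ℂ)) • T.tg m z := by
          rw [sum_lie', Finset.sum_smul]
          refine Finset.sum_congr rfl fun p _ => ?_
          rw [smul_lie, hT.br_dg 0 m p z, zero_add, smul_smul]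
        rw [hk0, add_zero, hd0] at h
        rw [← tg_eq_zero_iff T m]
        rw [tg_add, tg_smul]
        exact h
      have hlie0 : ∀ z : g, ⁅(T.e x).1 0, z⁆ = 0 := by
        intro z
        have h := hbr 0 z
        simpa using h
      have ha0 : (T.e x).1 0 = 0 := by
        have hmem : (T.e x).1 0 ∈ LieAlgebra.center ℂ g :=
          (LieModule.mem_maxTrivSubmodule ℂ g g _).2 fun z => by
            rw [← lie_skew, hlie0 z, neg_zero]
        rw [LieAlgebra.center_eq_bot ℂ g] at hmem
        exact hmem
      have hD0 : (T.e x).2.2 0 = 0 := by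
        funext q
        obtain ⟨z0, hz0⟩ := exists_ne (0 : g)
        have h := hbr (Pi.single q 1) z0
        rw [hlie0 z0, zero_add] at h
        have hsum : (∑ p : Fin (N + 1),
            ((T.e x).2.2 0) p * (((Pi.single q 1 : Idx N) p : ℤ) : ℂ))
            = ((T.e x).2.2 0) q := by
          rw [Finset.sum_eq_single q]
          · simp
          · intro p _ hp
            simp [Pi.single_apply, hp]
          · simp
        rw [hsum] at h
        rcases smul_eq_zero.mp h with h' | h'
        · exact h'
        · exact absurd h' hz0
      rw [hxeq, ha0, hD0, tg_zero, zero_add]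
      have hlast : ∑ p : Fin (N + 1), ((0 : Fin (N + 1) → ℂ)) p • T.d 0 p = 0 := by
        refine Finset.sum_eq_zero fun p _ => ?_
        simp
      rw [hlast, add_zero]
      exact Submodule.sum_mem _ fun p _ =>
        Submodule.smul_mem _ _ (Submodule.subset_span ⟨p, rfl⟩)
    · intro hx y
      induction hx using Submodule.span_induction with
      | mem z hz =>
        obtain ⟨j, rfl⟩ := hz
        exact k_zero_central hT j y
      | zero => exact zero_lie y
      | add u v _ _ hu hv => rw [add_lie, hu, hv, add_zero]
      | smul c u _ hu => rw [smul_lie, hu, smul_zero]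

end ToroidalPaper
end

section
/- Let χ: Z → ℂ be a linear map and suppose there exists a non-zero g(μ,ν)-module B satisfying axioms (B1)–(B4) (i.e., the category B_χ is non-trivial). Then χ(k_j) = 0 for all j = 1, …, N. -/
namespace ToroidalPaper

noncomputable section

namespace Tor

variable {N : ℕ} {g : Type} [LieRing g] [LieAlgebra ℂ g] (T : Tor N g)

/-- The set of homogeneous generators t^r⊗x, t^r k_p, t^r d_p of g(μ,ν) whose
t₀-degree r₀ satisfies the predicate `P`. -/
def genSet (P : ℤ → Prop) : Set T.G :=
  {z | ∃ r : Idx N, P (r 0) ∧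
    ((∃ x : g, z = T.tg r x) ∨ (∃ p, z = T.k r p) ∨ (∃ p, z = T.d r p))}

/-- The homogeneous component g_n of the ℤ-grading of g(μ,ν) by t₀-degree. -/
def gdeg (n : ℤ) : Submodule ℂ T.G := Submodule.span ℂ (T.genSet (· = n))

/-- The subalgebra g₊ = ⊕_{n ≥ 1} g_n (as a subspace). -/
def gpos : Submodule ℂ T.G := Submodule.span ℂ (T.genSet (1 ≤ ·))

variable (Bm : Type) [AddCommGroup Bm] [Module ℂ Bm] [LieRingModule T.G Bm]
  [LieModule ℂ T.G Bm]

/-- The weight space B_m = {v ∈ B | d_j v = m_j v, j = 0,…,N}. -/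
def wt (m : Fin (N + 1) → ℂ) : Submodule ℂ Bm :=
  ⨅ j : Fin (N + 1),
    Module.End.eigenspace (LieModule.toEnd ℂ T.G Bm (T.d 0 j)) (m j)

/-- The axioms (B1)-(B4) of the category B_χ, where the central character χ is
recorded through its values χ j = χ(k_j). -/
structure InCat (χ : Fin (N + 1) → ℂ) : Prop where
  b1_indep : iSupIndep (fun m : Fin (N + 1) → ℂ => T.wt Bm m)
  b1_spans : (⨆ m : Fin (N + 1) → ℂ, T.wt Bm m) = ⊤
  b2 : ∀ m : Fin (N + 1) → ℂ, FiniteDimensional ℂ (T.wt Bm m)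
  b3 : ∀ (j : Fin (N + 1)) (v : Bm), ⁅T.k 0 j, v⁆ = χ j • v
  b4 : ∃ M : ℝ, ∀ m : Fin (N + 1) → ℂ, T.wt Bm m ≠ ⊥ → (m 0).re ≤ M

end Tor

/-- A bundled object of the category B_χ. -/
structure CatObj {N : ℕ} {g : Type} [LieRing g] [LieAlgebra ℂ g] (T : Tor N g)
    (χ : Fin (N + 1) → ℂ) where
  carrier : Type
  [instAdd : AddCommGroup carrier]
  [instMod : Module ℂ carrier]
  [instLieMod : LieRingModule T.G carrier]
  [instLieMod' : LieModule ℂ T.G carrier]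
  incat : T.InCat carrier χ

attribute [instance] CatObj.instAdd CatObj.instMod CatObj.instLieMod CatObj.instLieMod'

/-- Irreducibility of an object of B_χ as a g(μ,ν)-module. -/
def CatObj.IsIrreducible {N : ℕ} {g : Type} [LieRing g] [LieAlgebra ℂ g] {T : Tor N g}
    {χ : Fin (N + 1) → ℂ} (L : CatObj T χ) : Prop :=
  Nontrivial L.carrier ∧ ∀ S : LieSubmodule ℂ T.G L.carrier, S = ⊥ ∨ S = ⊤

end

end ToroidalPaper

namespace ToroidalPaper

section AuxForStatement3

open Module

variable {N : ℕ} {g : Type} [LieRing g] [LieAlgebra ℂ g]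

/-- the multi-index w·e_j -/
def eJ {N : ℕ} (j : Fin (N + 1)) (w : ℤ) : Idx N := fun p => if p = j then w else 0

/-- the multi-index e_0 + s·e_j -/
def eR {N : ℕ} (j : Fin (N + 1)) (s : ℤ) : Idx N :=
  fun p => if p = 0 then 1 else if p = j then s else 0

lemma eJ_zero {N : ℕ} (j : Fin (N + 1)) : eJ j 0 = (0 : Idx N) := by
  funext p; simp [eJ]

/-- t^{w e_j} k_j is an exact form, hence zero in K, for w ≠ 0. -/
lemma k_exact (T : Tor N g) (j : Fin (N + 1)) (w : ℤ) (hw : w ≠ 0) :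
    T.k (eJ j w) j = 0 := by
  have hmk : (Submodule.Quotient.mk (p := dR N)
      (Finsupp.single (eJ j w) (Pi.single j (1 : ℂ)))) = 0 := by
    rw [Submodule.Quotient.mk_eq_zero]
    have hgen : (Finsupp.single (eJ j w) (fun p => ((eJ j w p : ℤ) : ℂ)) : OmegaR N)
        ∈ dR N := Submodule.subset_span ⟨eJ j w, rfl⟩
    have h2 : (Finsupp.single (eJ j w) (Pi.single j (1 : ℂ)) : OmegaR N)
        = (w : ℂ)⁻¹ • Finsupp.single (eJ j w) (fun p => ((eJ j w p : ℤ) : ℂ)) := by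
      rw [Finsupp.smul_single]
      congr 1
      funext p
      by_cases hp : p = j
      · subst hp
        have hw' : (w : ℂ) ≠ 0 := Int.cast_ne_zero.mpr hw
        have hww : ((w : ℂ))⁻¹ * (w : ℂ) = 1 := inv_mul_cancel₀ hw'
        simp [eJ, Pi.single_apply, Pi.smul_apply, hww]
      · simp [eJ, Pi.single_apply, hp]
    rw [h2]
    exact Submodule.smul_mem _ _ hgen
  show T.e.symm _ = 0
  rw [hmk]
  simp

lemma mem_wt_iff (T : Tor N g) (Bm : Type) [AddCommGroup Bm] [Module ℂ Bm]
    [LieRingModule T.G Bm] [LieModule ℂ T.G Bm] (m : Fin (N + 1) → ℂ) (v : Bm) :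
    v ∈ T.wt Bm m ↔ ∀ b, ⁅T.d 0 b, v⁆ = m b • v := by
  simp [Tor.wt, Submodule.mem_iInf, Module.End.mem_eigenspace_iff,
    LieModule.toEnd_apply_apply]

lemma wt_shift (T : Tor N g) (Bm : Type) [AddCommGroup Bm] [Module ℂ Bm]
    [LieRingModule T.G Bm] [LieModule ℂ T.G Bm] (z : T.G) (r : Idx N)
    (hz : ∀ b, ⁅T.d 0 b, z⁆ = (r b : ℂ) • z) (m : Fin (N + 1) → ℂ) (v : Bm)
    (hv : v ∈ T.wt Bm m) :
    ⁅z, v⁆ ∈ T.wt Bm (fun b => m b + (r b : ℂ)) := by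
  rw [mem_wt_iff] at hv ⊢
  intro b
  rw [leibniz_lie, hz b, hv b, smul_lie, lie_smul, add_smul, add_comm]

end AuxForStatement3


section AuxBrackets

open Module

variable {N : ℕ} {g : Type} [LieRing g] [LieAlgebra ℂ g]
variable {T : Tor N g} {B : g →ₗ[ℂ] g →ₗ[ℂ] ℂ} {μ ν : ℂ}

/-- kSum with first argument 0 vanishes. -/
lemma kSum_zero_left (T : Tor N g) (m : Idx N) : T.kSum 0 m = 0 := by
  simp [Tor.kSum]

lemma d_k_shift (hT : T.IsToroidal B μ ν) (m' : Idx N) (q b : Fin (N + 1)) :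
    ⁅T.d 0 b, T.k m' q⁆ = (m' b : ℂ) • T.k m' q := by
  have h := hT.br_dk 0 m' b q
  rw [zero_add, kSum_zero_left, smul_zero, add_zero] at h
  exact h

lemma d_d_shift (hT : T.IsToroidal B μ ν) (m' : Idx N) (b : Fin (N + 1)) :
    ⁅T.d 0 b, T.d m' 0⁆ = (m' b : ℂ) • T.d m' 0 := by
  have h := hT.br_dd 0 m' b 0
  simp only [zero_add] at h
  have h0 : ∀ p : Fin (N + 1), (((0 : Idx N) p : ℤ) : ℂ) = 0 := by
    intro p; simp [Pi.zero_apply]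
  rw [h, h0, h0]
  simp

lemma Y_X_bracket (hT : T.IsToroidal B μ ν) (j : Fin (N + 1)) (hj : j ≠ 0) (s t : ℤ) :
    ⁅T.d (-(eR j s)) 0, T.k (eR j t) j⁆ = T.k (eJ j (t - s)) j := by
  have h := hT.br_dk (-(eR j s)) (eR j t) 0 j
  have h1 : ((eR j t 0 : ℤ) : ℂ) = 1 := by simp [eR]
  have h2 : (-(eR j s)) + eR j t = eJ j (t - s) := by
    funext p
    by_cases hp0 : p = 0
    · subst hp0
      simp [eR, eJ, Ne.symm hj]
    · by_cases hpj : p = j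
      · subst hpj
        simp [eR, eJ, hj]
        ring
      · simp [eR, eJ, hp0, hpj]
  have h3 : (if (0 : Fin (N + 1)) = j then (1 : ℂ) else 0) = 0 := if_neg (Ne.symm hj)
  rw [h1, h2, h3] at h
  simpa using h

end AuxBrackets

/-- Lemma 2.1: if the category B_χ contains a non-zero module,
then χ(k_j) = 0 for all j = 1,…,N.  The linear map χ : Z → ℂ on the span
Z = ⟨k₀,…,k_N⟩ is recorded by its values χ j = χ(k_j). -/
theorem statement3 (N : ℕ) (hN : 1 ≤ N) (g : Type) [LieRing g] [LieAlgebra ℂ g]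
    [FiniteDimensional ℂ g] [LieAlgebra.IsSimple ℂ g]
    (B : g →ₗ[ℂ] g →ₗ[ℂ] ℂ)
    (hBsymm : ∀ x y : g, B x y = B y x)
    (hBnondeg : ∀ x : g, (∀ y : g, B x y = 0) → x = 0)
    (hBinv : ∀ x y z : g, B ⁅x, y⁆ z = B x ⁅y, z⁆)
    (μ ν : ℂ) (T : Tor N g) (hT : T.IsToroidal B μ ν)
    (χ : Fin (N + 1) → ℂ)
    (hne : ∃ C : CatObj T χ, Nontrivial C.carrier) :
    ∀ j : Fin (N + 1), j ≠ 0 → χ j = 0 := by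
  intro j hj
  by_contra hχ
  obtain ⟨C, hC⟩ := hne
  haveI := hC
  have hcat := C.incat
  -- Step 1: there is a nonzero weight space
  have hAx : ∃ m : Fin (N + 1) → ℂ, T.wt C.carrier m ≠ ⊥ := by
    by_contra h
    push_neg at h
    have h2 : (⨆ m : Fin (N + 1) → ℂ, T.wt C.carrier m) = ⊥ := by simp [h]
    rw [hcat.b1_spans] at h2
    obtain ⟨x, hx⟩ := exists_ne (0 : C.carrier)
    have hxmem : x ∈ (⊤ : Submodule ℂ C.carrier) := Submodule.mem_top
    rw [h2, Submodule.mem_bot] at hxmem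
    exact hx hxmem
  -- Step 2: pick a weight close to the supremum of real parts
  set A : Set ℝ := {x | ∃ m : Fin (N + 1) → ℂ, T.wt C.carrier m ≠ ⊥ ∧ (m 0).re = x}
    with hAdef
  have hAne : A.Nonempty := by
    obtain ⟨m, hm⟩ := hAx
    exact ⟨(m 0).re, m, hm, rfl⟩
  have hAbdd : BddAbove A := by
    obtain ⟨M, hM⟩ := hcat.b4
    refine ⟨M, ?_⟩
    rintro x ⟨m, hm, rfl⟩
    exact hM m hm
  obtain ⟨x, hxA, hx⟩ := exists_lt_of_lt_csSup hAne (sub_one_lt (sSup A))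
  obtain ⟨m₀, hm₀ne, hm₀x⟩ := hxA
  have htop : ∀ m' : Fin (N + 1) → ℂ, (m' 0).re = (m₀ 0).re + 1 →
      T.wt C.carrier m' = ⊥ := by
    intro m' hre
    by_contra hne'
    have hmem : (m' 0).re ∈ A := ⟨m', hne', rfl⟩
    have hle := le_csSup hAbdd hmem
    rw [hre, hm₀x] at hle
    linarith
  obtain ⟨u, hu_mem, hu0⟩ := (Submodule.ne_bot_iff _).mp hm₀ne
  -- Step 3: every raising operator X t := t^{e₀+t eⱼ} k_j kills u
  have hXu : ∀ t : ℤ, ⁅T.k (eR j t) j, u⁆ = 0 := by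
    intro t
    have hmem := wt_shift T C.carrier (T.k (eR j t) j) (eR j t)
      (fun b => d_k_shift hT (eR j t) j b) m₀ u hu_mem
    have hbot : T.wt C.carrier (fun b => m₀ b + ((eR j t b : ℤ) : ℂ)) = ⊥ := by
      apply htop
      simp [eR, Complex.add_re]
    rw [hbot, Submodule.mem_bot] at hmem
    exact hmem
  -- bracket of X t with Y s acting on any vector
  have hbr : ∀ (t s : ℤ) (w : C.carrier),
      ⁅(⁅T.k (eR j t) j, T.d (-(eR j s)) 0⁆ : T.G), w⁆
        = -((if t = s then χ j else 0) • w) := by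
    intro t s w
    have hxy : (⁅T.k (eR j t) j, T.d (-(eR j s)) 0⁆ : T.G)
        = -(T.k (eJ j (t - s)) j) := by
      rw [← lie_skew, Y_X_bracket hT j hj s t]
    rw [hxy, neg_lie]
    by_cases hts : t = s
    · rw [if_pos hts]
      subst hts
      rw [sub_self, eJ_zero, hcat.b3 j w]
    · rw [if_neg hts, k_exact T j (t - s) (sub_ne_zero.mpr hts), zero_lie]
      simp
  -- X t applied to Y s u
  have hXY : ∀ t s : ℤ, ⁅T.k (eR j t) j, ⁅T.d (-(eR j s)) 0, u⁆⁆
      = -((if t = s then χ j else 0) • u) := by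
    intro t s
    rw [leibniz_lie, hXu t, lie_zero, add_zero, hbr]
  -- X t applied to (Y s)(Y (-s)) u
  have hXv : ∀ t s : ℤ, t ≠ -s →
      ⁅T.k (eR j t) j, ⁅T.d (-(eR j s)) 0, ⁅T.d (-(eR j (-s))) 0, u⁆⁆⁆
        = -((if t = s then χ j else 0) • ⁅T.d (-(eR j (-s))) 0, u⁆) := by
    intro t s hts
    rw [leibniz_lie]
    have h2 : ⁅T.k (eR j t) j, ⁅T.d (-(eR j (-s))) 0, u⁆⁆ = 0 := by
      rw [hXY t (-s), if_neg hts]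
      simp
    rw [h2, lie_zero, add_zero, hbr]
  -- the composite functional
  have hΦ : ∀ s s' : ℤ, 1 ≤ s → 1 ≤ s' →
      ⁅T.k (eR j (-s)) j, ⁅T.k (eR j s) j,
          ⁅T.d (-(eR j s')) 0, ⁅T.d (-(eR j (-s'))) 0, u⁆⁆⁆⁆
        = (if s = s' then ((χ j * χ j) • u) else 0) := by
    intro s s' hs hs'
    have hts : s ≠ -s' := by omega
    rw [hXv s s' hts]
    by_cases he : s = s'
    · rw [if_pos he, if_pos he]
      subst he
      rw [lie_neg, lie_smul, hXY (-s) (-s), if_pos rfl]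
      simp [smul_smul]
    · rw [if_neg he, if_neg he]
      simp
  -- weight of the vectors (Y s')(Y (-s')) u
  set mlow : Fin (N + 1) → ℂ := fun b => m₀ b - (if b = 0 then 2 else 0) with hmlow
  have hvmem : ∀ s' : ℤ,
      ⁅T.d (-(eR j s')) 0, ⁅T.d (-(eR j (-s'))) 0, u⁆⁆ ∈ T.wt C.carrier mlow := by
    intro s'
    have h1 := wt_shift T C.carrier (T.d (-(eR j (-s'))) 0) (-(eR j (-s')))
      (fun b => d_d_shift hT (-(eR j (-s'))) b) m₀ u hu_mem
    have h2 := wt_shift T C.carrier (T.d (-(eR j s')) 0) (-(eR j s'))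
      (fun b => d_d_shift hT (-(eR j s')) b) _ _ h1
    have heq : (fun b => (fun b => m₀ b + (((-(eR j (-s'))) b : ℤ) : ℂ)) b
        + (((-(eR j s')) b : ℤ) : ℂ)) = mlow := by
      funext b
      simp only [hmlow, eR, Pi.neg_apply]
      split_ifs <;> push_cast <;> ring
    rw [heq] at h2
    exact h2
  -- finite dimensionality contradiction
  haveI : FiniteDimensional ℂ (T.wt C.carrier mlow) := hcat.b2 mlow
  set dW := Module.finrank ℂ (T.wt C.carrier mlow) with hdW
  set vv : ℕ → C.carrier :=
    fun n => ⁅T.d (-(eR j ((n : ℤ) + 1))) 0, ⁅T.d (-(eR j (-((n : ℤ) + 1)))) 0, u⁆⁆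
    with hvv
  have hli : LinearIndependent ℂ
      (fun i : Fin (dW + 1) => (⟨vv i, hvmem ((i : ℕ) + 1)⟩ : T.wt C.carrier mlow)) := by
    rw [Fintype.linearIndependent_iff]
    intro l hl i
    have hl' : ∑ i' : Fin (dW + 1), l i' • vv i' = (0 : C.carrier) := by
      have := congrArg (T.wt C.carrier mlow).subtype hl
      simpa using this
    set E : C.carrier →ₗ[ℂ] C.carrier :=
      (LieModule.toEnd ℂ T.G C.carrier (T.k (eR j (-((i : ℕ) + 1))) j)).comp
      (LieModule.toEnd ℂ T.G C.carrier (T.k (eR j ((i : ℕ) + 1)) j)) with hE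
    have happ : E (∑ i' : Fin (dW + 1), l i' • vv i') = E 0 := congrArg E hl'
    rw [map_sum, map_zero] at happ
    have hterm : ∀ i' : Fin (dW + 1), E (l i' • vv i')
        = l i' • (if ((i : ℕ) + 1 : ℤ) = ((i' : ℕ) + 1 : ℤ)
            then (χ j * χ j) • u else 0) := by
      intro i'
      rw [map_smul]
      congr 1
      have : E (vv i') = ⁅T.k (eR j (-((i : ℕ) + 1))) j,
          ⁅T.k (eR j ((i : ℕ) + 1)) j, vv i'⁆⁆ := rfl
      rw [this, hvv]
      exact hΦ ((i : ℕ) + 1) ((i' : ℕ) + 1) (by omega) (by omega)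
    rw [Finset.sum_congr rfl (fun i' _ => hterm i')] at happ
    have hsum : ∑ i' : Fin (dW + 1),
        l i' • (if ((i : ℕ) + 1 : ℤ) = ((i' : ℕ) + 1 : ℤ)
          then (χ j * χ j) • u else 0) = l i • ((χ j * χ j) • u) := by
      rw [Finset.sum_eq_single i]
      · rw [if_pos rfl]
      · intro b _ hb
        rw [if_neg, smul_zero]
        intro hcontra
        exact hb (Fin.ext (by omega)).symm
      · intro h
        exact absurd (Finset.mem_univ i) h
    rw [hsum] at happ
    rw [smul_smul] at happ
    rcases smul_eq_zero.mp happ with h | h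
    · rcases mul_eq_zero.mp h with h' | h'
      · exact h'
      · exact absurd (mul_self_eq_zero.mp h') hχ
    · exact absurd h hu0
  have hcard := hli.fintype_card_le_finrank
  rw [Fintype.card_fin] at hcard
  omega

end ToroidalPaper
end

section
/- Let c ∈ ℂ, c ≠ 0, and let χ: Z → ℂ satisfy χ(k₀) = c and χ(k_j) = 0 for j = 1,…,N. Let L be an irreducible module in the category B_χ. Then the eigenvalues of d₀ on L lie in a single coset of ℤ in ℂ, among them there is a unique eigenvalue d whose real part is maximal, and the corresponding eigenspace T (the top of L) satisfies g₊T = 0 and is an irreducible g₀-module. -/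
namespace ToroidalPaper

noncomputable section Aux

open Module LieModule

namespace Tor

variable {N : ℕ} {g : Type} [LieRing g] [LieAlgebra ℂ g] (T : Tor N g)
  {B : g →ₗ[ℂ] g →ₗ[ℂ] ℂ} {μ ν : ℂ}

/-- `u` is one of the basic generators of multidegree `r`. -/
def IsGen (r : Idx N) (u : T.G) : Prop :=
  (∃ x : g, u = T.tg r x) ∨ (∃ p, u = T.k r p) ∨ (∃ p, u = T.d r p)

lemma mem_genSet_iff {P : ℤ → Prop} {u : T.G} :
    u ∈ T.genSet P ↔ ∃ r : Idx N, P (r 0) ∧ T.IsGen r u := Iff.rfl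

lemma kSum_zero_left (m : Idx N) : T.kSum 0 m = 0 := by
  simp [Tor.kSum]

lemma d0_lie_gen (hT : T.IsToroidal B μ ν) (j : Fin (N + 1)) {r : Idx N} {u : T.G}
    (hu : T.IsGen r u) : ⁅T.d 0 j, u⁆ = ((r j : ℤ) : ℂ) • u := by
  rcases hu with ⟨x, rfl⟩ | ⟨p, rfl⟩ | ⟨p, rfl⟩
  · rw [hT.br_dg, zero_add]
  · rw [hT.br_dk, T.kSum_zero_left, smul_zero, add_zero, zero_add]
  · rw [hT.br_dd]
    simp [zero_add]

section Module

variable (M : Type) [AddCommGroup M] [Module ℂ M] [LieRingModule T.G M] [LieModule ℂ T.G M]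

lemma mem_wt_iff {m : Fin (N + 1) → ℂ} {v : M} :
    v ∈ T.wt M m ↔ ∀ j, ⁅T.d 0 j, v⁆ = m j • v := by
  simp only [Tor.wt, Submodule.mem_iInf, Module.End.mem_eigenspace_iff,
    LieModule.toEnd_apply_apply]

lemma mem_eig_iff {z : ℂ} {v : M} :
    v ∈ Module.End.eigenspace (LieModule.toEnd ℂ T.G M (T.d 0 0)) z ↔
      ⁅T.d 0 0, v⁆ = z • v := by
  rw [Module.End.mem_eigenspace_iff, LieModule.toEnd_apply_apply]

lemma gen_lie_wt (hT : T.IsToroidal B μ ν) {r : Idx N} {u : T.G} (hu : T.IsGen r u)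
    {m : Fin (N + 1) → ℂ} {v : M} (hv : v ∈ T.wt M m) :
    ⁅u, v⁆ ∈ T.wt M (fun j => m j + ((r j : ℤ) : ℂ)) := by
  rw [T.mem_wt_iff M] at hv ⊢
  intro j
  rw [leibniz_lie, T.d0_lie_gen hT j hu, hv j, smul_lie, lie_smul, add_smul]
  exact add_comm _ _

lemma gen_lie_eig (hT : T.IsToroidal B μ ν) {r : Idx N} {u : T.G} (hu : T.IsGen r u)
    {z : ℂ} {v : M} (hv : v ∈ Module.End.eigenspace (LieModule.toEnd ℂ T.G M (T.d 0 0)) z) :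
    ⁅u, v⁆ ∈ Module.End.eigenspace (LieModule.toEnd ℂ T.G M (T.d 0 0))
      (z + ((r 0 : ℤ) : ℂ)) := by
  rw [T.mem_eig_iff M] at hv ⊢
  rw [leibniz_lie, T.d0_lie_gen hT 0 hu, hv, smul_lie, lie_smul, add_smul]
  exact add_comm _ _

/-- bracketing with a fixed vector, as a linear map in the Lie algebra argument -/
def lieL (v : M) : T.G →ₗ[ℂ] M where
  toFun u := ⁅u, v⁆
  map_add' a b := add_lie a b v
  map_smul' c a := smul_lie c a v

lemma lie_mem_of_forall_gen {s : Set T.G} {p : Submodule ℂ M} {v : M}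
    (h : ∀ u ∈ s, ⁅u, v⁆ ∈ p) {u : T.G} (hu : u ∈ Submodule.span ℂ s) : ⁅u, v⁆ ∈ p := by
  have hle : Submodule.span ℂ s ≤ p.comap (T.lieL M v) :=
    Submodule.span_le.mpr fun w hw => h w hw
  exact hle hu

lemma span_genSet_top : Submodule.span ℂ (T.genSet fun _ => True) = ⊤ := by
  classical
  set sp := Submodule.span ℂ (T.genSet fun _ => True) with hsp
  have htg : ∀ (r : Idx N) (x : g), T.tg r x ∈ sp :=
    fun r x => Submodule.subset_span ⟨r, trivial, Or.inl ⟨x, rfl⟩⟩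
  have hkk : ∀ (r : Idx N) (p : Fin (N + 1)), T.k r p ∈ sp :=
    fun r p => Submodule.subset_span ⟨r, trivial, Or.inr (Or.inl ⟨p, rfl⟩)⟩
  have hdd : ∀ (r : Idx N) (p : Fin (N + 1)), T.d r p ∈ sp :=
    fun r p => Submodule.subset_span ⟨r, trivial, Or.inr (Or.inr ⟨p, rfl⟩)⟩
  have hgen : ∀ (φ : OmegaR N →ₗ[ℂ] T.G),
      (∀ (r : Idx N) (p : Fin (N + 1)), φ (Finsupp.single r (Pi.single p 1)) ∈ sp) →
      ∀ w : OmegaR N, φ w ∈ sp := by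
    intro φ hφ w
    induction w using Finsupp.induction with
    | zero => simpa using sp.zero_mem
    | single_add r c w _ _ ih =>
      rw [map_add]
      refine sp.add_mem ?_ ih
      have hsingle : (Finsupp.single r c : OmegaR N)
          = ∑ p : Fin (N + 1), (c p) • Finsupp.single r (Pi.single p 1) := by
        calc (Finsupp.single r c : OmegaR N)
            = (Finsupp.lsingle r : (Fin (N + 1) → ℂ) →ₗ[ℂ] OmegaR N)
                (∑ p : Fin (N + 1), Pi.single p (c p)) := by
              rw [Finset.univ_sum_single, Finsupp.lsingle_apply]
          _ = ∑ p : Fin (N + 1),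
                (Finsupp.lsingle r : (Fin (N + 1) → ℂ) →ₗ[ℂ] OmegaR N) (Pi.single p (c p)) :=
              map_sum _ _ _
          _ = ∑ p : Fin (N + 1), (c p) • Finsupp.single r (Pi.single p 1) := by
              refine Finset.sum_congr rfl fun p _ => ?_
              rw [Finsupp.lsingle_apply, Finsupp.smul_single, ← Pi.single_smul, smul_eq_mul,
                mul_one]
      rw [hsingle, map_sum]
      refine Submodule.sum_mem _ fun p _ => ?_
      rw [map_smul]
      exact sp.smul_mem _ (hφ r p)
  have h1 : ∀ f : Idx N →₀ g, T.e.symm ((f, 0, 0) : Carrier N g) ∈ sp := by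
    intro f
    induction f using Finsupp.induction with
    | zero =>
      have h00 : (((0 : Idx N →₀ g), 0, 0) : Carrier N g) = 0 := rfl
      rw [h00, map_zero]; exact sp.zero_mem
    | single_add r x' f' _ _ ih =>
      have hd : ((Finsupp.single r x' + f', 0, 0) : Carrier N g)
          = (Finsupp.single r x', 0, 0) + (f', 0, 0) := by simp [Prod.ext_iff]
      rw [hd, map_add]
      exact sp.add_mem (htg r x') ih
  have h2 : ∀ κ : Kmod N, T.e.symm ((0, κ, 0) : Carrier N g) ∈ sp := by
    intro κ
    obtain ⟨w', rfl⟩ := Submodule.Quotient.mk_surjective (dR N) κ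
    let φ : OmegaR N →ₗ[ℂ] T.G :=
      T.e.symm.toLinearMap ∘ₗ (LinearMap.inr ℂ (Idx N →₀ g) _) ∘ₗ
        (LinearMap.inl ℂ (Kmod N) (Idx N →₀ (Fin (N + 1) → ℂ))) ∘ₗ (dR N).mkQ
    have hφ : ∀ w'' : OmegaR N,
        φ w'' = T.e.symm ((0, Submodule.Quotient.mk w'', 0) : Carrier N g) := fun _ => rfl
    rw [← hφ]
    exact hgen φ (fun r p => hkk r p) w'
  have h3 : ∀ w : Idx N →₀ Fin (N + 1) → ℂ, T.e.symm ((0, 0, w) : Carrier N g) ∈ sp := by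
    intro w
    let φ : OmegaR N →ₗ[ℂ] T.G :=
      T.e.symm.toLinearMap ∘ₗ (LinearMap.inr ℂ (Idx N →₀ g) _) ∘ₗ
        (LinearMap.inr ℂ (Kmod N) (Idx N →₀ (Fin (N + 1) → ℂ)))
    have hφ : ∀ w'' : OmegaR N,
        φ w'' = T.e.symm ((0, 0, w'') : Carrier N g) := fun _ => rfl
    rw [← hφ]
    exact hgen φ (fun r p => hdd r p) w
  rw [Submodule.eq_top_iff']
  intro x
  have hx : x = T.e.symm (T.e x) := (T.e.symm_apply_apply x).symm
  rcases he : T.e x with ⟨f, κ, w⟩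
  rw [he] at hx
  have hdec : ((f, κ, w) : Carrier N g) = (f, 0, 0) + (0, κ, 0) + (0, 0, w) := by
    simp [Prod.ext_iff]
  rw [hx, hdec, map_add, map_add]
  exact sp.add_mem (sp.add_mem (h1 f) (h2 κ)) (h3 w)


/-- One step of applying negative-degree generators. -/
def negStep (P : Submodule ℂ M) : Submodule ℂ M :=
  P ⊔ Submodule.span ℂ {y : M | ∃ u ∈ T.genSet (fun n => n ≤ -1), ∃ w ∈ P, y = ⁅u, w⁆}

/-- Iterated application of negative-degree generators to `S`. -/
def Wseq (S : Submodule ℂ M) (n : ℕ) : Submodule ℂ M := (T.negStep M)^[n] S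

lemma Wseq_zero (S : Submodule ℂ M) : T.Wseq M S 0 = S := rfl

lemma Wseq_succ (S : Submodule ℂ M) (n : ℕ) :
    T.Wseq M S (n + 1) = T.negStep M (T.Wseq M S n) :=
  Function.iterate_succ_apply' _ _ _

lemma Wseq_mono (S : Submodule ℂ M) : Monotone (T.Wseq M S) :=
  monotone_nat_of_le_succ fun n => by rw [Wseq_succ]; exact le_sup_left

/-- The submodule generated by `S` under repeated application of negative generators. -/
def Wsup (S : Submodule ℂ M) : Submodule ℂ M := ⨆ n, T.Wseq M S n

lemma mem_Wsup (S : Submodule ℂ M) {x : M} :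
    x ∈ T.Wsup M S ↔ ∃ n, x ∈ T.Wseq M S n :=
  Submodule.mem_iSup_of_directed _ (T.Wseq_mono M S).directed_le

lemma Wseq_le_Wsup (S : Submodule ℂ M) (n : ℕ) : T.Wseq M S n ≤ T.Wsup M S := le_iSup _ n

lemma lie_mem_Wsup (S : Submodule ℂ M)
    (h1 : ∀ u ∈ T.genSet (fun n => 1 ≤ n), ∀ v ∈ S, ⁅u, v⁆ = (0 : M))
    (h0 : ∀ u ∈ T.genSet (fun n => n = 0), ∀ v ∈ S, ⁅u, v⁆ ∈ S) :
    ∀ (x : T.G) (w : M), w ∈ T.Wsup M S → ⁅x, w⁆ ∈ T.Wsup M S := by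
  suffices hgen : ∀ n, ∀ (x : T.G), ∀ w ∈ T.Wseq M S n, ⁅x, w⁆ ∈ T.Wsup M S by
    intro x w hw
    obtain ⟨n, hn⟩ := (T.mem_Wsup M S).mp hw
    exact hgen n x w hn
  intro n
  induction n with
  | zero =>
    intro x w hw
    rw [T.Wseq_zero M S] at hw
    refine T.lie_mem_of_forall_gen M (s := T.genSet fun _ => True) ?_
      (by rw [T.span_genSet_top]; exact Submodule.mem_top)
    rintro u ⟨r, -, hu⟩
    rcases lt_trichotomy (r 0) 0 with hr | hr | hr
    · refine T.Wseq_le_Wsup M S 1 ?_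
      rw [T.Wseq_succ M S 0, Tor.negStep]
      refine Submodule.mem_sup_right (Submodule.subset_span ?_)
      exact ⟨u, ⟨r, by omega, hu⟩, w, hw, rfl⟩
    · exact T.Wseq_le_Wsup M S 0 (h0 u ⟨r, hr, hu⟩ w hw)
    · rw [h1 u ⟨r, by omega, hu⟩ w hw]
      exact (T.Wsup M S).zero_mem
  | succ n ih =>
    intro x w hw
    rw [T.Wseq_succ M S n, Tor.negStep, Submodule.mem_sup] at hw
    obtain ⟨w₁, hw₁, w₂, hw₂, rfl⟩ := hw
    rw [lie_add]
    refine (T.Wsup M S).add_mem (ih x w₁ hw₁) ?_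
    induction hw₂ using Submodule.span_induction with
    | mem y hy =>
      obtain ⟨u', hu', w', hw', rfl⟩ := hy
      rw [leibniz_lie]
      refine (T.Wsup M S).add_mem (ih _ w' hw') ?_
      obtain ⟨j, hj⟩ := (T.mem_Wsup M S).mp (ih x w' hw')
      refine T.Wseq_le_Wsup M S (j + 1) ?_
      rw [T.Wseq_succ M S j, Tor.negStep]
      exact Submodule.mem_sup_right (Submodule.subset_span ⟨u', hu', _, hj, rfl⟩)
    | zero => rw [lie_zero]; exact zero_mem _
    | add a b _ _ ha hb => rw [lie_add]; exact add_mem ha hb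
    | smul c a _ ha => rw [lie_smul]; exact Submodule.smul_mem _ c ha

lemma Wseq_le_sup_Q (hT : T.IsToroidal B μ ν) (S : Submodule ℂ M) (z : ℂ)
    (hS : S ≤ Module.End.eigenspace (LieModule.toEnd ℂ T.G M (T.d 0 0)) z) (n : ℕ) :
    T.Wseq M S n ≤ S ⊔ ⨆ k : ℕ,
      Module.End.eigenspace (LieModule.toEnd ℂ T.G M (T.d 0 0)) (z - ((k : ℂ) + 1)) := by
  set D0 := LieModule.toEnd ℂ T.G M (T.d 0 0) with hD0
  set Q : Submodule ℂ M := ⨆ k : ℕ, Module.End.eigenspace D0 (z - ((k : ℂ) + 1)) with hQ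
  induction n with
  | zero => rw [T.Wseq_zero M S]; exact le_sup_left
  | succ n ih =>
    rw [T.Wseq_succ M S n, Tor.negStep]
    refine sup_le ih ?_
    rw [Submodule.span_le]
    rintro y ⟨u, ⟨r, hr, hu⟩, w, hw, rfl⟩
    have hw' : w ∈ S ⊔ Q := ih hw
    rw [Submodule.mem_sup] at hw'
    obtain ⟨s, hs, q, hq, rfl⟩ := hw'
    rw [lie_add]
    refine Submodule.mem_sup_right (Q.add_mem ?_ ?_)
    · have hmem : ⁅u, s⁆ ∈ Module.End.eigenspace D0 (z + ((r 0 : ℤ) : ℂ)) :=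
        T.gen_lie_eig M hT hu (hS hs)
      have h2 : ((-(r 0) - 1).toNat : ℤ) = -(r 0) - 1 := Int.toNat_of_nonneg (by omega)
      have h3 : (((-(r 0) - 1).toNat : ℕ) : ℂ) = -((r 0 : ℤ) : ℂ) - 1 := by
        rw [← Int.cast_natCast, h2]
        push_cast
        ring
      have hz : z + ((r 0 : ℤ) : ℂ) = z - ((((-(r 0) - 1).toNat : ℕ) : ℂ) + 1) := by
        rw [h3]; ring
      rw [hz] at hmem
      exact le_iSup (fun k : ℕ => Module.End.eigenspace D0 (z - ((k : ℂ) + 1))) _ hmem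
    · have hmap : Submodule.map (LieModule.toEnd ℂ T.G M u) Q ≤ Q := by
        rw [hQ, Submodule.map_iSup]
        refine iSup_le fun k => ?_
        rintro y ⟨q', hq', rfl⟩
        have hmem : ⁅u, q'⁆ ∈ Module.End.eigenspace D0 (z - ((k : ℂ) + 1) + ((r 0 : ℤ) : ℂ)) :=
          T.gen_lie_eig M hT hu hq'
        have h2 : (((-(r 0)).toNat : ℤ)) = -(r 0) := Int.toNat_of_nonneg (by omega)
        have h3 : ((((-(r 0)).toNat : ℕ)) : ℂ) = -((r 0 : ℤ) : ℂ) := by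
          rw [← Int.cast_natCast, h2]
          push_cast
          ring
        have hz : z - ((k : ℂ) + 1) + ((r 0 : ℤ) : ℂ)
            = z - ((((k + (-(r 0)).toNat : ℕ)) : ℂ) + 1) := by
          push_cast [h3]
          ring
        rw [hz] at hmem
        simpa [LieModule.toEnd_apply_apply] using
          le_iSup (fun k : ℕ => Module.End.eigenspace D0 (z - ((k : ℂ) + 1))) _ hmem
      exact hmap ⟨q, hq, by simp [LieModule.toEnd_apply_apply]⟩

lemma lie_mem_coset (hT : T.IsToroidal B μ ν) (C : Set (Fin (N + 1) → ℂ))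
    (hC : ∀ m ∈ C, ∀ r : Idx N, (fun j => m j + ((r j : ℤ) : ℂ)) ∈ C)
    (x : T.G) (v : M) (hv : v ∈ ⨆ m ∈ C, T.wt M m) : ⁅x, v⁆ ∈ ⨆ m ∈ C, T.wt M m := by
  refine T.lie_mem_of_forall_gen M (s := T.genSet fun _ => True) ?_
    (by rw [T.span_genSet_top]; exact Submodule.mem_top)
  rintro u ⟨r, -, hu⟩
  have hmap : Submodule.map (LieModule.toEnd ℂ T.G M u) (⨆ m ∈ C, T.wt M m)
      ≤ ⨆ m ∈ C, T.wt M m := by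
    simp_rw [Submodule.map_iSup]
    refine iSup₂_le fun m hm => ?_
    rintro y ⟨w, hw, rfl⟩
    refine le_iSup₂ (f := fun m (_ : m ∈ C) => T.wt M m) _ (hC m hm r) ?_
    simpa [LieModule.toEnd_apply_apply] using T.gen_lie_wt M hT hu hw
  exact hmap ⟨v, hv, by simp [LieModule.toEnd_apply_apply]⟩

lemma wt_le_eig (m : Fin (N + 1) → ℂ) :
    T.wt M m ≤ Module.End.eigenspace (LieModule.toEnd ℂ T.G M (T.d 0 0)) (m 0) :=
  iInf_le _ 0

lemma eig_le_biSup_wt {χ : Fin (N + 1) → ℂ} (inc : T.InCat M χ) (w : ℂ) :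
    Module.End.eigenspace (LieModule.toEnd ℂ T.G M (T.d 0 0)) w ≤
      ⨆ m ∈ {m : Fin (N + 1) → ℂ | m 0 = w}, T.wt M m := by
  classical
  set D0 := LieModule.toEnd ℂ T.G M (T.d 0 0) with hD0
  intro v hv
  have hvtop : v ∈ ⨆ m, T.wt M m := by rw [inc.b1_spans]; exact Submodule.mem_top
  rw [Submodule.mem_iSup_iff_exists_finsupp] at hvtop
  obtain ⟨f, hf, hsum⟩ := hvtop
  set s₁ := f.support.filter (fun m => m 0 = w) with hs₁
  set s₂ := f.support.filter (fun m => ¬ m 0 = w) with hs₂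
  have hu1 : (∑ m ∈ s₁, f m) ∈ ⨆ m ∈ {m : Fin (N + 1) → ℂ | m 0 = w}, T.wt M m := by
    refine Submodule.sum_mem _ fun m hm => ?_
    rw [hs₁, Finset.mem_filter] at hm
    exact le_iSup₂ (f := fun m (_ : m ∈ {m : Fin (N + 1) → ℂ | m 0 = w}) => T.wt M m)
      m hm.2 (hf m)
  have hu2 : (∑ m ∈ s₁, f m) ∈ Module.End.eigenspace D0 w := by
    refine Submodule.sum_mem _ fun m hm => ?_
    rw [hs₁, Finset.mem_filter] at hm
    rw [← hm.2]
    exact T.wt_le_eig M m (hf m)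
  have hrest : v - ∑ m ∈ s₁, f m = ∑ m ∈ s₂, f m := by
    rw [← hsum, Finsupp.sum,
      ← Finset.sum_filter_add_sum_filter_not f.support (fun m => m 0 = w), ← hs₁, ← hs₂]
    abel
  have hd1 : v - ∑ m ∈ s₁, f m ∈ Module.End.eigenspace D0 w := sub_mem hv hu2
  have hd2 : v - ∑ m ∈ s₁, f m ∈ ⨆ z' : ℂ, ⨆ _ : z' ≠ w, Module.End.eigenspace D0 z' := by
    rw [hrest]
    refine Submodule.sum_mem _ fun m hm => ?_
    rw [hs₂, Finset.mem_filter] at hm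
    exact le_iSup₂ (f := fun z' (_ : z' ≠ w) => Module.End.eigenspace D0 z')
      (m 0) hm.2 (T.wt_le_eig M m (hf m))
  have hdisj : Disjoint (Module.End.eigenspace D0 w)
      (⨆ z' : ℂ, ⨆ _ : z' ≠ w, Module.End.eigenspace D0 z') :=
    Module.End.eigenspaces_iSupIndep D0 w
  have h0 : v - ∑ m ∈ s₁, f m = 0 := Submodule.disjoint_def.mp hdisj _ hd1 hd2
  rw [sub_eq_zero] at h0
  rw [h0]
  exact hu1

end Module

end Tor

end Aux

end ToroidalPaper
namespace ToroidalPaper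

/-- for an irreducible module L in B_χ (χ(k₀) = c ≠ 0,
χ(k_j) = 0 for j ≥ 1): the eigenvalues of d₀ lie in one ℤ-coset, there is a
unique eigenvalue of maximal real part, and the corresponding eigenspace (the
top) is killed by g₊ and is an irreducible g₀-module. -/
theorem statement4 (N : ℕ) (hN : 1 ≤ N) (g : Type) [LieRing g] [LieAlgebra ℂ g]
    [FiniteDimensional ℂ g] [LieAlgebra.IsSimple ℂ g]
    (B : g →ₗ[ℂ] g →ₗ[ℂ] ℂ)
    (hBsymm : ∀ x y : g, B x y = B y x)
    (hBnondeg : ∀ x : g, (∀ y : g, B x y = 0) → x = 0)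
    (hBinv : ∀ x y z : g, B ⁅x, y⁆ z = B x ⁅y, z⁆)
    (μ ν : ℂ) (T : Tor N g) (hT : T.IsToroidal B μ ν)
    (c : ℂ) (hc : c ≠ 0) (χ : Fin (N + 1) → ℂ)
    (hχ0 : χ 0 = c) (hχ : ∀ j : Fin (N + 1), j ≠ 0 → χ j = 0)
    (L : CatObj T χ) (hirr : L.IsIrreducible) :
    -- the set of eigenvalues of d₀ on L, read off from the weight spaces
    let E : Set ℂ := {z | ∃ m : Fin (N + 1) → ℂ, T.wt L.carrier m ≠ ⊥ ∧ m 0 = z}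
    -- (i) all eigenvalues of d₀ lie in a single coset of ℤ in ℂ
    (∀ z ∈ E, ∀ z' ∈ E, ∃ n : ℤ, z - z' = (n : ℂ)) ∧
    -- (ii) there is a unique eigenvalue d of maximal real part
    (∃! z : ℂ, z ∈ E ∧ ∀ w ∈ E, w.re ≤ z.re) ∧
    -- (iii) for this d, the top T = eigenspace of d₀ satisfies g₊T = 0,
    -- is g₀-invariant, and is an irreducible g₀-module
    (∀ z : ℂ, (z ∈ E ∧ ∀ w ∈ E, w.re ≤ z.re) →
      (let Top : Submodule ℂ L.carrier :=
        Module.End.eigenspace (LieModule.toEnd ℂ T.G L.carrier (T.d 0 0)) z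
      Top ≠ ⊥ ∧
      (∀ x ∈ T.gpos, ∀ v ∈ Top, ⁅x, v⁆ = (0 : L.carrier)) ∧
      (∀ x ∈ T.gdeg 0, ∀ v ∈ Top, ⁅x, v⁆ ∈ Top) ∧
      (∀ S : Submodule ℂ L.carrier, S ≤ Top →
        (∀ x ∈ T.gdeg 0, ∀ v ∈ S, ⁅x, v⁆ ∈ S) → S = ⊥ ∨ S = Top))) := by
  intro E
  classical
  have hEmem : ∀ z : ℂ, z ∈ E ↔ ∃ m : Fin (N + 1) → ℂ, T.wt L.carrier m ≠ ⊥ ∧ m 0 = z :=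
    fun z => Iff.rfl
  -- E is nonempty
  have hne : ∃ z, z ∈ E := by
    by_contra h
    push_neg at h
    have hbot : ∀ m : Fin (N + 1) → ℂ, T.wt L.carrier m = ⊥ := by
      intro m
      by_contra hm
      exact h (m 0) ((hEmem (m 0)).mpr ⟨m, hm, rfl⟩)
    have htb : (⊤ : Submodule ℂ L.carrier) = ⊥ := by
      rw [← L.incat.b1_spans]
      simp [hbot]
    obtain ⟨a, b, hab⟩ := hirr.1
    refine hab ?_
    have ha : a ∈ (⊥ : Submodule ℂ L.carrier) := by rw [← htb]; exact Submodule.mem_top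
    have hb : b ∈ (⊥ : Submodule ℂ L.carrier) := by rw [← htb]; exact Submodule.mem_top
    rw [Submodule.mem_bot] at ha hb
    rw [ha, hb]
  -- (i) single coset of ℤ
  have hcoset : ∀ z ∈ E, ∀ z' ∈ E, ∃ n : ℤ, z - z' = (n : ℂ) := by
    intro z hz z' hz'
    by_contra hcon
    push_neg at hcon
    obtain ⟨m, hm, hm0⟩ := (hEmem z).mp hz
    obtain ⟨m', hm', hm0'⟩ := (hEmem z').mp hz'
    set C : Set (Fin (N + 1) → ℂ) := {mm | ∃ n : ℤ, mm 0 - z' = (n : ℂ)} with hC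
    have hCstable : ∀ mm ∈ C, ∀ r : Idx N, (fun j => mm j + ((r j : ℤ) : ℂ)) ∈ C := by
      rintro mm ⟨n, hn⟩ r
      refine ⟨n + r 0, ?_⟩
      push_cast
      linear_combination hn
    let SL : LieSubmodule ℂ T.G L.carrier :=
      { (⨆ mm ∈ C, T.wt L.carrier mm : Submodule ℂ L.carrier) with
        lie_mem := fun {x v} hv => T.lie_mem_coset L.carrier hT C hCstable x v hv }
    have hSLcoe : (SL : Submodule ℂ L.carrier) = ⨆ mm ∈ C, T.wt L.carrier mm := rfl
    have hm'le : T.wt L.carrier m' ≤ (SL : Submodule ℂ L.carrier) := by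
      rw [hSLcoe]
      exact le_iSup₂ (f := fun mm (_ : mm ∈ C) => T.wt L.carrier mm) m'
        ⟨0, by rw [hm0']; simp⟩
    rcases hirr.2 SL with hbot | htop
    · apply hm'
      rw [← le_bot_iff]
      have hb : (SL : Submodule ℂ L.carrier) = ⊥ := by
        rw [hbot, LieSubmodule.bot_toSubmodule]
      rw [← hb]
      exact hm'le
    · have hmC : m ∉ C := by
        rintro ⟨n, hn⟩
        rw [hm0] at hn
        exact hcon n hn
      have hdis : Disjoint (T.wt L.carrier m) ((SL : Submodule ℂ L.carrier)) := by
        rw [hSLcoe]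
        exact L.incat.b1_indep.disjoint_biSup hmC
      have htop' : (SL : Submodule ℂ L.carrier) = ⊤ := by
        rw [htop, LieSubmodule.top_toSubmodule]
      rw [htop', disjoint_top] at hdis
      exact hm hdis
  refine ⟨hcoset, ?_, ?_⟩
  · -- (ii) unique maximal eigenvalue
    obtain ⟨z₀, hz₀⟩ := hne
    have hex : ∃ z : ℂ, z ∈ E ∧ ∀ w ∈ E, w.re ≤ z.re := by
      obtain ⟨Mb, hMb⟩ := L.incat.b4
      set A : ℤ → Prop := fun n => (z₀ + (n : ℂ)) ∈ E with hA
      have hA0 : A 0 := by simp only [hA]; simpa using hz₀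
      have hAbdd : ∀ n : ℤ, A n → n ≤ ⌈Mb - z₀.re⌉ := by
        intro n hn
        obtain ⟨m, hm, hm0⟩ := (hEmem _).mp hn
        have h1 : (z₀ + (n : ℂ)).re ≤ Mb := by rw [← hm0]; exact hMb m hm
        have h2 : z₀.re + (n : ℝ) ≤ Mb := by
          simpa [Complex.add_re, Complex.intCast_re] using h1
        have h3 : (n : ℝ) ≤ Mb - z₀.re := by linarith
        exact_mod_cast h3.trans (Int.le_ceil _)
      obtain ⟨nmax, hnmax, hmax⟩ := Int.exists_greatest_of_bdd ⟨⌈Mb - z₀.re⌉, hAbdd⟩ ⟨0, hA0⟩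
      refine ⟨z₀ + (nmax : ℂ), hnmax, ?_⟩
      intro w hw
      obtain ⟨n, hn⟩ := hcoset w hw z₀ hz₀
      have hwz : w = z₀ + (n : ℂ) := by linear_combination hn
      have hAn : A n := by simp only [hA]; rw [← hwz]; exact hw
      have hle : n ≤ nmax := hmax n hAn
      rw [hwz]
      simp only [Complex.add_re, Complex.intCast_re]
      have hle' : (n : ℝ) ≤ (nmax : ℝ) := by exact_mod_cast hle
      linarith
    obtain ⟨zm, hzm⟩ := hex
    refine ⟨zm, hzm, ?_⟩
    intro z1 h1
    obtain ⟨n, hn⟩ := hcoset z1 h1.1 zm hzm.1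
    have hre : z1.re = zm.re := le_antisymm (hzm.2 z1 h1.1) (h1.2 zm hzm.1)
    have hren : (n : ℝ) = 0 := by
      have hcr := congrArg Complex.re hn
      simp only [Complex.sub_re, Complex.intCast_re] at hcr
      rw [hre] at hcr
      linarith
    have hn0 : n = 0 := by exact_mod_cast hren
    rw [hn0] at hn
    simp only [Int.cast_zero] at hn
    linear_combination hn
  · -- (iii)
    intro z hz
    intro Top
    have hTopdef : Top
        = Module.End.eigenspace (LieModule.toEnd ℂ T.G L.carrier (T.d 0 0)) z := rfl
    have hEbot : ∀ w : ℂ, z.re < w.re →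
        Module.End.eigenspace (LieModule.toEnd ℂ T.G L.carrier (T.d 0 0)) w = ⊥ := by
      intro w hw
      rw [← le_bot_iff]
      refine le_trans (T.eig_le_biSup_wt L.carrier L.incat w) ?_
      refine iSup₂_le fun m hm => ?_
      by_cases hb : T.wt L.carrier m = ⊥
      · rw [hb]
      · exfalso
        have hwE : w ∈ E := (hEmem w).mpr ⟨m, hb, hm⟩
        have := hz.2 w hwE
        linarith
    have htopne : Top ≠ ⊥ := by
      obtain ⟨m, hm, hm0⟩ := (hEmem z).mp hz.1
      intro hb
      apply hm
      rw [← le_bot_iff, ← hb, hTopdef, ← hm0]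
      exact T.wt_le_eig L.carrier m
    have hpos : ∀ x ∈ T.gpos, ∀ v ∈ Top, ⁅x, v⁆ = (0 : L.carrier) := by
      intro x hx v hv
      rw [hTopdef] at hv
      have hmem0 : ⁅x, v⁆ ∈ (⊥ : Submodule ℂ L.carrier) := by
        refine T.lie_mem_of_forall_gen L.carrier (s := T.genSet (1 ≤ ·))
          (p := ⊥) ?_ hx
        rintro u ⟨r, hr, hu⟩
        have hmem := T.gen_lie_eig L.carrier hT hu hv
        rw [hEbot (z + ((r 0 : ℤ) : ℂ)) ?_] at hmem
        · exact hmem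
        · simp only [Complex.add_re, Complex.intCast_re]
          have hr' : (1 : ℝ) ≤ ((r 0 : ℤ) : ℝ) := by exact_mod_cast hr
          linarith
      exact (Submodule.mem_bot ℂ).mp hmem0
    have hg0 : ∀ x ∈ T.gdeg 0, ∀ v ∈ Top, ⁅x, v⁆ ∈ Top := by
      intro x hx v hv
      rw [hTopdef] at hv ⊢
      refine T.lie_mem_of_forall_gen L.carrier (s := T.genSet (· = 0)) ?_ hx
      rintro u ⟨r, hr, hu⟩
      have hmem := T.gen_lie_eig L.carrier hT hu hv
      rw [hr] at hmem
      simpa using hmem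
    refine ⟨htopne, hpos, hg0, ?_⟩
    intro S hS hSinv
    by_cases hSbot : S = ⊥
    · exact Or.inl hSbot
    right
    have h1 : ∀ u ∈ T.genSet (fun n => 1 ≤ n), ∀ v ∈ S, ⁅u, v⁆ = (0 : L.carrier) :=
      fun u hu v hv => hpos u (Submodule.subset_span hu) v (hS hv)
    have h0 : ∀ u ∈ T.genSet (fun n => n = 0), ∀ v ∈ S, ⁅u, v⁆ ∈ S :=
      fun u hu v hv => hSinv u (Submodule.subset_span hu) v hv
    let WL : LieSubmodule ℂ T.G L.carrier :=
      { T.Wsup L.carrier S with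
        lie_mem := fun {x v} hv => T.lie_mem_Wsup L.carrier S h1 h0 x v hv }
    have hWcoe : (WL : Submodule ℂ L.carrier) = T.Wsup L.carrier S := rfl
    have hSle : S ≤ T.Wsup L.carrier S := T.Wseq_le_Wsup L.carrier S 0
    rcases hirr.2 WL with hbot | htop
    · exfalso
      have hWb : T.Wsup L.carrier S = ⊥ := by
        rw [← hWcoe, hbot, LieSubmodule.bot_toSubmodule]
      rw [hWb] at hSle
      exact hSbot (le_bot_iff.mp hSle)
    · have hWtop : T.Wsup L.carrier S = ⊤ := by
        rw [← hWcoe, htop, LieSubmodule.top_toSubmodule]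
      have hQdis : Disjoint Top (⨆ k : ℕ, Module.End.eigenspace
          (LieModule.toEnd ℂ T.G L.carrier (T.d 0 0)) (z - ((k : ℂ) + 1))) := by
        rw [hTopdef]
        have hle : (⨆ k : ℕ, Module.End.eigenspace
            (LieModule.toEnd ℂ T.G L.carrier (T.d 0 0)) (z - ((k : ℂ) + 1)))
            ≤ ⨆ z' : ℂ, ⨆ _ : z' ≠ z, Module.End.eigenspace
              (LieModule.toEnd ℂ T.G L.carrier (T.d 0 0)) z' := by
          refine iSup_le fun k => ?_
          refine le_iSup₂ (f := fun z' (_ : z' ≠ z) => Module.End.eigenspace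
            (LieModule.toEnd ℂ T.G L.carrier (T.d 0 0)) z') (z - ((k : ℂ) + 1)) ?_
          intro h
          rw [sub_eq_self] at h
          have hk1 : (((k + 1 : ℕ)) : ℂ) ≠ 0 := Nat.cast_ne_zero.mpr (Nat.succ_ne_zero k)
          refine hk1 ?_
          push_cast
          exact h
        exact Disjoint.mono_right hle
          (Module.End.eigenspaces_iSupIndep (LieModule.toEnd ℂ T.G L.carrier (T.d 0 0)) z)
      have hTopleS : Top ≤ S := by
        intro v hv
        have hvW : v ∈ T.Wsup L.carrier S := by rw [hWtop]; exact Submodule.mem_top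
        obtain ⟨n, hn⟩ := (T.mem_Wsup L.carrier S).mp hvW
        have hvSQ := T.Wseq_le_sup_Q L.carrier hT S z (hTopdef ▸ hS) n hn
        rw [Submodule.mem_sup] at hvSQ
        obtain ⟨s, hs, q, hq, hsq⟩ := hvSQ
        have hqTop : q ∈ Top := by
          have hq' : q = v - s := eq_sub_of_add_eq' hsq
          rw [hq']
          exact Top.sub_mem hv (hS hs)
        have hq0 : q = 0 := Submodule.disjoint_def.mp hQdis q hqTop hq
        rw [← hsq, hq0, add_zero]
        exact hs
      exact le_antisymm hS hTopleS

end ToroidalPaper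
end

section
/- For all μ, ν ∈ ℂ, the subalgebra g₊ = ⊕_{n≥1} g_n of the full toroidal Lie algebra g(μ,ν) is generated as a Lie algebra by its component g₁ of t₀-degree 1. -/
namespace ToroidalPaper

noncomputable section

namespace Tor

variable {N : ℕ} {g : Type} [LieRing g] [LieAlgebra ℂ g] (T : Tor N g)

/-- The subalgebra g₋ = ⊕_{n ≤ -1} g_n (as a subspace). -/
def gneg : Submodule ℂ T.G := Submodule.span ℂ (T.genSet (· ≤ -1))

lemma tg_mem_span (P : ℤ → Prop) {r : Idx N} (h : P (r 0)) (x : g) :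
    T.tg r x ∈ Submodule.span ℂ (T.genSet P) :=
  Submodule.subset_span ⟨r, h, Or.inl ⟨x, rfl⟩⟩

lemma k_mem_span (P : ℤ → Prop) {r : Idx N} (h : P (r 0)) (p : Fin (N + 1)) :
    T.k r p ∈ Submodule.span ℂ (T.genSet P) :=
  Submodule.subset_span ⟨r, h, Or.inr (Or.inl ⟨p, rfl⟩)⟩

lemma d_mem_span (P : ℤ → Prop) {r : Idx N} (h : P (r 0)) (p : Fin (N + 1)) :
    T.d r p ∈ Submodule.span ℂ (T.genSet P) :=
  Submodule.subset_span ⟨r, h, Or.inr (Or.inr ⟨p, rfl⟩)⟩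

lemma kSum_mem_span (P : ℤ → Prop) {r m : Idx N} (h : P ((r + m) 0)) :
    T.kSum r m ∈ Submodule.span ℂ (T.genSet P) :=
  Submodule.sum_mem _ fun p _ => Submodule.smul_mem _ _ (T.k_mem_span P h p)

lemma genSet_bracket {B : g →ₗ[ℂ] g →ₗ[ℂ] ℂ} {μ ν : ℂ} (hT : T.IsToroidal B μ ν)
    {z w : T.G} (hz : z ∈ T.genSet (1 ≤ ·)) (hw : w ∈ T.genSet (1 ≤ ·)) :
    ⁅z, w⁆ ∈ T.gpos := by
  obtain ⟨r, hr, hz⟩ := hz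
  obtain ⟨m, hm, hw⟩ := hw
  have hrm : (1 : ℤ) ≤ (r + m) 0 := by
    simp only [Pi.add_apply]; omega
  have hmr : (1 : ℤ) ≤ (m + r) 0 := by
    simp only [Pi.add_apply]; omega
  rcases hz with ⟨x, rfl⟩ | ⟨p, rfl⟩ | ⟨p, rfl⟩ <;>
    rcases hw with ⟨y, rfl⟩ | ⟨q, rfl⟩ | ⟨q, rfl⟩
  · rw [hT.br_gg]
    exact add_mem (T.tg_mem_span _ hrm _)
      (Submodule.smul_mem _ _ (T.kSum_mem_span _ hrm))
  · rw [← lie_skew, hT.br_kg]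
    simpa using zero_mem T.gpos
  · rw [← lie_skew, hT.br_dg]
    exact neg_mem (Submodule.smul_mem _ _ (T.tg_mem_span _ hmr _))
  · rw [hT.br_kg]; exact zero_mem _
  · rw [hT.br_kk]; exact zero_mem _
  · rw [← lie_skew, hT.br_dk]
    exact neg_mem (add_mem (Submodule.smul_mem _ _ (T.k_mem_span _ hmr _))
      (Submodule.smul_mem _ _ (T.kSum_mem_span _ hmr)))
  · rw [hT.br_dg]
    exact Submodule.smul_mem _ _ (T.tg_mem_span _ hrm _)
  · rw [hT.br_dk]
    exact add_mem (Submodule.smul_mem _ _ (T.k_mem_span _ hrm _))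
      (Submodule.smul_mem _ _ (T.kSum_mem_span _ hrm))
  · rw [hT.br_dd]
    refine add_mem (sub_mem (Submodule.smul_mem _ _ (T.d_mem_span _ hrm _))
      (Submodule.smul_mem _ _ (T.d_mem_span _ hrm _)))
      (Submodule.smul_mem _ _ (Submodule.sum_mem _ fun p _ =>
        Submodule.smul_mem _ _ (T.k_mem_span _ hrm _)))

lemma gpos_lie_mem {B : g →ₗ[ℂ] g →ₗ[ℂ] ℂ} {μ ν : ℂ} (hT : T.IsToroidal B μ ν)
    {z w : T.G} (hz : z ∈ T.gpos) (hw : w ∈ T.gpos) : ⁅z, w⁆ ∈ T.gpos := by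
  have key : ∀ z ∈ T.genSet (1 ≤ ·), ∀ w ∈ T.gpos, ⁅z, w⁆ ∈ T.gpos := by
    intro z hz w hw
    induction hw using Submodule.span_induction with
    | mem w hw => exact T.genSet_bracket hT hz hw
    | zero => rw [lie_zero]; exact zero_mem _
    | add a b _ _ ha hb => rw [lie_add]; exact add_mem ha hb
    | smul c a _ ha => rw [lie_smul]; exact Submodule.smul_mem _ _ ha
  induction hz using Submodule.span_induction with
  | mem z hz => exact key z hz w hw
  | zero => rw [zero_lie]; exact zero_mem _
  | add a b _ _ ha hb => rw [add_lie]; exact add_mem ha hb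
  | smul c a _ ha => rw [smul_lie]; exact Submodule.smul_mem _ _ ha

end Tor

/-- g₊ is generated as a Lie algebra by its component g₁. -/
theorem statement10 (N : ℕ) (hN : 1 ≤ N) (g : Type) [LieRing g] [LieAlgebra ℂ g]
    [FiniteDimensional ℂ g] [LieAlgebra.IsSimple ℂ g]
    (B : g →ₗ[ℂ] g →ₗ[ℂ] ℂ)
    (hBsymm : ∀ x y : g, B x y = B y x)
    (hBnondeg : ∀ x : g, (∀ y : g, B x y = 0) → x = 0)
    (hBinv : ∀ x y z : g, B ⁅x, y⁆ z = B x ⁅y, z⁆)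
    (μ ν : ℂ) (T : Tor N g) (hT : T.IsToroidal B μ ν) :
    (LieSubalgebra.lieSpan ℂ T.G (T.gdeg 1 : Set T.G)).toSubmodule = T.gpos := by
  set L := LieSubalgebra.lieSpan ℂ T.G (T.gdeg 1 : Set T.G) with hL
  apply le_antisymm
  · -- lieSpan ⊆ gpos : gpos is a Lie subalgebra containing gdeg 1
    let S : LieSubalgebra ℂ T.G :=
      { T.gpos with lie_mem' := fun hx hy => T.gpos_lie_mem hT hx hy }
    have h1 : L ≤ S := by
      rw [hL, LieSubalgebra.lieSpan_le]
      intro z hz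
      have hz' : z ∈ T.gdeg 1 := hz
      have : T.gdeg 1 ≤ T.gpos :=
        Submodule.span_mono (fun w ⟨r, hr, hc⟩ => ⟨r, by omega, hc⟩)
      exact this hz'
    exact fun z hz => h1 hz
  · -- gpos ⊆ lieSpan : induction on t₀-degree
    have base : ∀ r : Idx N, r 0 = 1 →
        (∀ x : g, T.tg r x ∈ L) ∧ (∀ p, T.k r p ∈ L) ∧ (∀ p, T.d r p ∈ L) := by
      intro r hr
      refine ⟨fun x => ?_, fun p => ?_, fun p => ?_⟩
      · exact LieSubalgebra.subset_lieSpan (T.tg_mem_span (· = 1) hr x)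
      · exact LieSubalgebra.subset_lieSpan (T.k_mem_span (· = 1) hr p)
      · exact LieSubalgebra.subset_lieSpan (T.d_mem_span (· = 1) hr p)
    obtain ⟨idx1, hidx1⟩ : ∃ a : Fin (N + 1), a ≠ 0 :=
      ⟨⟨1, by omega⟩, by
        intro h
        have := congrArg Fin.val h
        simp at this⟩
    have key : ∀ n : ℕ, ∀ r : Idx N, r 0 = (n : ℤ) + 1 →
        (∀ x : g, T.tg r x ∈ L) ∧ (∀ p, T.k r p ∈ L) ∧ (∀ p, T.d r p ∈ L) := by
      intro n
      induction n with
      | zero => intro r hr; exact base r (by simpa using hr)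
      | succ n ih =>
        intro r hr
        -- s of degree 1, m of degree n+1, with s + m = r
        set s : Idx N := Pi.single 0 1 with hsdef
        have hs0 : s 0 = 1 := by simp [hsdef]
        set m : Idx N := r - s with hmdef
        have hsm : s + m = r := by rw [hmdef]; abel
        have hm0 : m 0 = (n : ℤ) + 1 := by
          rw [hmdef]; simp only [Pi.sub_apply, hs0, hr]; push_cast; ring
        have hmIH := ih m hm0
        have hsL := base s hs0
        have hnz : ((m 0 : ℤ) : ℂ) ≠ 0 := by
          rw [hm0]; push_cast
          exact_mod_cast Nat.cast_add_one_ne_zero (R := ℂ) n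
        -- alternative s' with s' 0 = 1, m' idx1 = 1, s' + m' = r
        set s' : Idx N := Pi.single 0 1 + Pi.single idx1 (r idx1 - 1) with hs'def
        have hs'0 : s' 0 = 1 := by
          simp [hs'def, Pi.single_apply, hidx1, (Ne.symm hidx1)]
        set m' : Idx N := r - s' with hm'def
        have hs'm' : s' + m' = r := by rw [hm'def]; abel
        have hm'0 : m' 0 = (n : ℤ) + 1 := by
          rw [hm'def]; simp only [Pi.sub_apply, hs'0, hr]; push_cast; ring
        have hm'1 : m' idx1 = 1 := by
          rw [hm'def]
          simp [hs'def, Pi.single_apply, hidx1, Ne.symm hidx1]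
        have hm'IH := ih m' hm'0
        have hs'L := base s' hs'0
        -- tg
        have htg : ∀ x : g, T.tg r x ∈ L := by
          intro x
          have hb := hT.br_dg s m 0 x
          rw [hsm] at hb
          have hmem : ((m 0 : ℤ) : ℂ) • T.tg r x ∈ L := by
            rw [← hb]; exact L.lie_mem (hsL.2.2 0) (hmIH.1 x)
          have := L.smul_mem (((m 0 : ℤ) : ℂ))⁻¹ hmem
          rwa [inv_smul_smul₀ hnz] at this
        -- k
        have hk : ∀ b, T.k r b ∈ L := by
          intro b
          by_cases hb0 : b = 0
          · subst hb0
            have hb := hT.br_dk s' m' idx1 0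
            rw [hs'm', if_neg hidx1, zero_smul, add_zero, hm'1] at hb
            have hmem : T.k r 0 ∈ L := by
              have : ⁅T.d s' idx1, T.k m' 0⁆ ∈ L :=
                L.lie_mem (hs'L.2.2 idx1) (hm'IH.2.1 0)
              rwa [hb, Int.cast_one, one_smul] at this
            exact hmem
          · have hb := hT.br_dk s m 0 b
            rw [hsm, if_neg (Ne.symm hb0), zero_smul, add_zero] at hb
            have hmem : ((m 0 : ℤ) : ℂ) • T.k r b ∈ L := by
              rw [← hb]; exact L.lie_mem (hsL.2.2 0) (hmIH.2.1 b)
            have := L.smul_mem (((m 0 : ℤ) : ℂ))⁻¹ hmem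
            rwa [inv_smul_smul₀ hnz] at this
        -- d, case b ≠ 0
        have hdne : ∀ b, b ≠ 0 → T.d r b ∈ L := by
          intro b hb0
          have hb := hT.br_dd s m 0 b
          have hsb : s b = 0 := Pi.single_eq_of_ne hb0 1
          rw [hsm, hsb] at hb
          simp only [Int.cast_zero, zero_smul, sub_zero] at hb
          have hSum : (∑ p : Fin (N + 1), ((m p : ℤ) : ℂ) • T.k r p) ∈ L :=
            Submodule.sum_mem L.toSubmodule fun p _ =>
              Submodule.smul_mem _ _ (hk p)
          have hmem : ((m 0 : ℤ) : ℂ) • T.d r b ∈ L := by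
            have h1 : ((m 0 : ℤ) : ℂ) • T.d r b = ⁅T.d s 0, T.d m b⁆ -
                (μ * ((m 0 : ℤ) : ℂ) * 0 +
                  ν * ((s 0 : ℤ) : ℂ) * ((m b : ℤ) : ℂ)) •
                  (∑ p : Fin (N + 1), ((m p : ℤ) : ℂ) • T.k r p) := by
              rw [hb]
              exact (add_sub_cancel_right _ _).symm
            rw [h1]
            exact sub_mem (L.lie_mem (hsL.2.2 0) (hmIH.2.2 b))
              (L.smul_mem _ hSum)
          have := L.smul_mem (((m 0 : ℤ) : ℂ))⁻¹ hmem
          rwa [inv_smul_smul₀ hnz] at this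
        -- d, case b = 0
        have hd0 : T.d r 0 ∈ L := by
          have hb := hT.br_dd s' m' idx1 0
          rw [hs'm', hm'1, hs'0] at hb
          simp only [Int.cast_one, one_smul] at hb
          have hSum : (∑ p : Fin (N + 1), ((m' p : ℤ) : ℂ) • T.k r p) ∈ L :=
            Submodule.sum_mem L.toSubmodule fun p _ =>
              Submodule.smul_mem _ _ (hk p)
          have h1 : T.d r 0 = ⁅T.d s' idx1, T.d m' 0⁆ + T.d r idx1 -
              (μ * 1 * 1 +
                ν * ((s' idx1 : ℤ) : ℂ) * ((m' 0 : ℤ) : ℂ)) •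
                (∑ p : Fin (N + 1), ((m' p : ℤ) : ℂ) • T.k r p) := by
            rw [hb]
            abel
          rw [h1]
          exact sub_mem (add_mem (L.lie_mem (hs'L.2.2 idx1) (hm'IH.2.2 0))
            (hdne idx1 hidx1)) (L.smul_mem _ hSum)
        refine ⟨htg, hk, fun p => ?_⟩
        by_cases hp : p = 0
        · exact hp ▸ hd0
        · exact hdne p hp
    rw [Tor.gpos]
    rw [Submodule.span_le]
    rintro z ⟨r, hr, hc⟩
    have hrn : r 0 = ((r 0 - 1).toNat : ℤ) + 1 := by omega
    obtain ⟨h1, h2, h3⟩ := key (r 0 - 1).toNat r hrn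
    rcases hc with ⟨x, rfl⟩ | ⟨p, rfl⟩ | ⟨p, rfl⟩
    · exact h1 x
    · exact h2 p
    · exact h3 p

end

end ToroidalPaper
end
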